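/- arXiv:2012.09848 — 8 statements merged into one kernel-verified Lean document; each statement's English description precedes it below -/
import Mathlib

section
/- Let (X,d) be a proper metric space and let γ, σ : [0,∞) → X be two geodesic rays. Then γ and σ are strongly asymptotic (i.e. there exist T ≥ 0 and S ≥ 0 with lim_{t→∞} d(γ(t+T), σ(t+S)) = 0) if and only if lim_{t→∞} inf_{s≥0} d(γ(t), σ(s)) = 0. -/
open Filter Metric Topology

/-- A geodesic ray: `d(γ s, γ t) = |s - t|` for all `s, t ≥ 0`. -/
def IsGeodesicRay {X : Type*} [MetricSpace X] (γ : ℝ → X) : Prop :=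
  ∀ s t : ℝ, 0 ≤ s → 0 ≤ t → dist (γ s) (γ t) = |s - t|

/-- A geodesic metric space: any two points are joined by a geodesic segment. -/
def IsGeodesicSpace (X : Type*) [MetricSpace X] : Prop :=
  ∀ x y : X, ∃ γ : ℝ → X, γ 0 = x ∧ γ (dist x y) = y ∧
    ∀ s ∈ Set.Icc (0 : ℝ) (dist x y), ∀ t ∈ Set.Icc (0 : ℝ) (dist x y),
      dist (γ s) (γ t) = |s - t|

/-- The Gromov product `(x|y)_p = (d(x,p) + d(y,p) - d(x,y))/2`. -/
noncomputable def gromovProduct {X : Type*} [MetricSpace X] (p x y : X) : ℝ :=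
  (dist x p + dist y p - dist x y) / 2

/-- `δ`-hyperbolicity: `(x|y)_p ≥ min((x|z)_p, (z|y)_p) - δ` for all `x, y, z, p`. -/
def IsDeltaHyperbolic (X : Type*) [MetricSpace X] (δ : ℝ) : Prop :=
  ∀ p x y z : X, min (gromovProduct p x z) (gromovProduct p z y) - δ ≤ gromovProduct p x y

/-- Two geodesic rays are strongly asymptotic if `d(γ(t+T), σ(t+S)) → 0` for
some `T, S ≥ 0`. -/
def StronglyAsymptotic {X : Type*} [MetricSpace X] (γ σ : ℝ → X) : Prop :=
  ∃ T S : ℝ, 0 ≤ T ∧ 0 ≤ S ∧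
    Tendsto (fun t => dist (γ (t + T)) (σ (t + S))) atTop (nhds 0)

/-- Two geodesic rays are asymptotic if `sup_{t ≥ 0} d(γ t, σ t) < ∞`. -/
def AsymptoticRays {X : Type*} [MetricSpace X] (γ σ : ℝ → X) : Prop :=
  ∃ M : ℝ, ∀ t : ℝ, 0 ≤ t → dist (γ t) (σ t) ≤ M

/-- A space has approaching geodesics if asymptotic geodesic rays are strongly
asymptotic. -/
def ApproachingGeodesics (X : Type*) [MetricSpace X] : Prop :=
  ∀ γ σ : ℝ → X, IsGeodesicRay γ → IsGeodesicRay σ →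
    AsymptoticRays γ σ → StronglyAsymptotic γ σ

/-- The geodesic region of radius `R` around the ray `γ`. -/
def geodesicRegion {X : Type*} [MetricSpace X] (γ : ℝ → X) (R : ℝ) : Set X :=
  {x | ∃ t : ℝ, 0 ≤ t ∧ dist x (γ t) < R}

/-
If `d(γ t, σ (t + L)) → 0` the infimum is squeezed to zero. Conversely, the Busemann-type quantity
`d(σ 0, γ t) - t` is nonincreasing and bounded below, so it converges to some `L`. Since `σ` is a
geodesic ray, any point `σ s` near `γ t` has `s ≈ d(σ 0, γ t) ≈ t + L`, whence
`d(γ t, σ (t + L)) ≤ 2 inf_s d(γ t, σ s) + |d(σ 0, γ t) - t - L| → 0`.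
-/

section

variable {X : Type*} [MetricSpace X] {γ σ : ℝ → X}

theorem stronglyAsymptotic_iff_exists_tendsto_dist_add :
    StronglyAsymptotic γ σ ↔ ∃ L, Tendsto (fun t => dist (γ t) (σ (t + L))) atTop (𝓝 0) := by
  constructor
  · rintro ⟨T, S, -, -, h⟩
    refine ⟨S - T, (h.comp (tendsto_atTop_add_const_right atTop (-T) tendsto_id)).congr
      fun t => ?_⟩
    simp only [Function.comp_apply, id]
    ring_nf
  · rintro ⟨L, h⟩
    rcases le_total 0 L with hL | hL
    · exact ⟨0, L, le_rfl, hL, by simpa using h⟩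
    · refine ⟨-L, 0, neg_nonneg.2 hL, le_rfl,
        (h.comp (tendsto_atTop_add_const_right atTop (-L) tendsto_id)).congr fun t => ?_⟩
      simp only [Function.comp_apply, id]
      ring_nf

theorem IsGeodesicRay.dist_zero_left (hγ : IsGeodesicRay γ) {t : ℝ} (ht : 0 ≤ t) :
    dist (γ 0) (γ t) = t := by
  rw [hγ 0 t le_rfl ht, zero_sub, abs_neg, abs_of_nonneg ht]

theorem IsGeodesicRay.antitoneOn_dist_sub (hγ : IsGeodesicRay γ) (p : X) :
    AntitoneOn (fun t => dist p (γ t) - t) (Set.Ici 0) := by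
  intro t ht t' ht' htt'
  have := dist_triangle p (γ t) (γ t')
  rw [hγ t t' ht ht', abs_sub_comm, abs_of_nonneg (sub_nonneg.2 htt')] at this
  simp only
  linarith

theorem IsGeodesicRay.neg_dist_le_dist_sub (hγ : IsGeodesicRay γ) (p : X) {t : ℝ} (ht : 0 ≤ t) :
    -dist p (γ 0) ≤ dist p (γ t) - t := by
  have := dist_triangle (γ 0) p (γ t)
  rw [hγ.dist_zero_left ht, dist_comm] at this
  linarith

theorem IsGeodesicRay.exists_tendsto_dist_sub (hγ : IsGeodesicRay γ) (p : X) :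
    ∃ L, Tendsto (fun t => dist p (γ t) - t) atTop (𝓝 L) := by
  set b : ℝ → ℝ := fun t => dist p (γ t) - t
  have hanti : Antitone fun t => b (max t 0) := fun t t' htt' =>
    hγ.antitoneOn_dist_sub p (Set.mem_Ici.2 (le_max_right _ _)) (Set.mem_Ici.2 (le_max_right _ _))
      (max_le_max htt' le_rfl)
  have hbdd : BddBelow (Set.range fun t => b (max t 0)) :=
    ⟨-dist p (γ 0), Set.forall_mem_range.2 fun t => hγ.neg_dist_le_dist_sub p (le_max_right _ _)⟩
  refine ⟨_, (tendsto_atTop_ciInf hanti hbdd).congr' ?_⟩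
  filter_upwards [eventually_ge_atTop 0] with t ht
  rw [max_eq_left ht]

theorem IsGeodesicRay.dist_le_two_mul_dist_add (hσ : IsGeodesicRay σ) (x : X) {s u : ℝ}
    (hs : 0 ≤ s) (hu : 0 ≤ u) : dist x (σ u) ≤ 2 * dist x (σ s) + |dist (σ 0) x - u| := by
  have hs_dist : |s - dist (σ 0) x| ≤ dist x (σ s) := by
    calc |s - dist (σ 0) x| = |dist (σ s) (σ 0) - dist x (σ 0)| := by
          rw [dist_comm (σ s), hσ.dist_zero_left hs, dist_comm x]
      _ ≤ dist (σ s) x := abs_dist_sub_le _ _ _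
      _ = dist x (σ s) := dist_comm _ _
  calc dist x (σ u) ≤ dist x (σ s) + |s - u| := hσ s u hs hu ▸ dist_triangle _ _ _
    _ ≤ dist x (σ s) + (|s - dist (σ 0) x| + |dist (σ 0) x - u|) := by
      gcongr; exact abs_sub_le _ _ _
    _ ≤ 2 * dist x (σ s) + |dist (σ 0) x - u| := by linarith

theorem IsGeodesicRay.dist_le_two_mul_iInf_dist_add (hσ : IsGeodesicRay σ) (x : X) {u : ℝ}
    (hu : 0 ≤ u) :
    dist x (σ u) ≤ 2 * (⨅ s : {s : ℝ // 0 ≤ s}, dist x (σ s)) + |dist (σ 0) x - u| := by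
  have : Nonempty {s : ℝ // 0 ≤ s} := ⟨⟨0, le_rfl⟩⟩
  have : (dist x (σ u) - |dist (σ 0) x - u|) / 2 ≤ ⨅ s : {s : ℝ // 0 ≤ s}, dist x (σ s) :=
    le_ciInf fun s => by linarith [hσ.dist_le_two_mul_dist_add x s.2 hu]
  linarith

theorem iInf_dist_le_dist (x : X) {u : ℝ} (hu : 0 ≤ u) :
    ⨅ s : {s : ℝ // 0 ≤ s}, dist x (σ s) ≤ dist x (σ u) :=
  ciInf_le ⟨0, Set.forall_mem_range.2 fun _ => dist_nonneg⟩ (⟨u, hu⟩ : {s : ℝ // 0 ≤ s})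

end

theorem stronglyAsymptotic_iff_inf_dist_tendsto_zero_general {X : Type*} [MetricSpace X]
    (γ σ : ℝ → X) (hγ : IsGeodesicRay γ) (hσ : IsGeodesicRay σ) :
    StronglyAsymptotic γ σ ↔
      Tendsto (fun t => ⨅ s : {s : ℝ // 0 ≤ s}, dist (γ t) (σ s.1)) atTop (nhds 0) := by
  rw [stronglyAsymptotic_iff_exists_tendsto_dist_add]
  constructor
  · rintro ⟨L, hL⟩
    refine squeeze_zero' (.of_forall fun _ => Real.iInf_nonneg fun _ => dist_nonneg) ?_ hL
    filter_upwards [eventually_ge_atTop (-L)] with t ht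
    exact iInf_dist_le_dist _ (by linarith)
  · intro hinf
    obtain ⟨L, hL⟩ := hγ.exists_tendsto_dist_sub (σ 0)
    have hbound : Tendsto (fun t => 2 * (⨅ s : {s : ℝ // 0 ≤ s}, dist (γ t) (σ s.1)) +
        |dist (σ 0) (γ t) - t - L|) atTop (𝓝 0) := by
      simpa using (hinf.const_mul 2).add (hL.sub_const L).abs
    refine ⟨L, squeeze_zero' (.of_forall fun _ => dist_nonneg) ?_ hbound⟩
    filter_upwards [eventually_ge_atTop (-L)] with t ht
    rw [sub_sub]
    exact hσ.dist_le_two_mul_iInf_dist_add (γ t) (by linarith)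

/-- In a proper metric space, two geodesic rays are strongly
asymptotic iff lim_{t→∞} inf_{s ≥ 0} d(γ t, σ s) = 0. -/
theorem stronglyAsymptotic_iff_inf_dist_tendsto_zero {X : Type*} [MetricSpace X]
    [ProperSpace X] (γ σ : ℝ → X) (hγ : IsGeodesicRay γ) (hσ : IsGeodesicRay σ) :
    StronglyAsymptotic γ σ ↔
      Tendsto (fun t => ⨅ s : {s : ℝ // 0 ≤ s}, dist (γ t) (σ s.1)) atTop (nhds 0) :=
  stronglyAsymptotic_iff_inf_dist_tendsto_zero_general γ σ hγ hσ
end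

section
/- Let (X,d) be a proper geodesic metric space which is δ-hyperbolic for some δ ≥ 0, i.e. (x|y)_p ≥ min{(x|z)_p, (z|y)_p} − δ for all x,y,z,p ∈ X, where (x|y)_p := (d(x,p)+d(y,p)−d(x,y))/2. Let γ be a geodesic ray such that any two geodesic rays each asymptotic to γ are strongly asymptotic to each other. Let p, z ∈ X and let (w_n) be a sequence in X converging to the boundary point of γ, meaning that for every C > 0 there exists N such that (w_n | γ(m))_p ≥ C for all n, m ≥ N. Then lim_{n→∞} ( d(z,w_n) − d(w_n,p) ) = B_γ(z,p). -/
open Filter Metric Topology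

/-!
Take geodesic segments from the base point `p` to the points `w n`. By properness and
Arzelà–Ascoli a subsequence converges to a geodesic ray `σ` from `p`, and hyperbolicity keeps
`σ` at bounded distance from `γ`; by hypothesis `σ` is then strongly asymptotic to `γ`, so
`x ↦ d(z, x) - d(x, p)` tends to `B` along `σ` as well. This function can only decrease from a
point of the segment `[p, w n]` to its endpoint `w n`, which bounds the upper limit along
`w` by `B`. Segments issued from `z` instead of `p` bound the lower limit in the same way.
-/

open scoped NNReal

section Hyperbolic

variable {X : Type*} [MetricSpace X]

theorem gromovProduct_le_dist (b x y : X) : gromovProduct b x y ≤ dist b x := by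
  unfold gromovProduct
  linarith [dist_triangle_left y b x, dist_comm x b]

theorem gromovProduct_sub_dist_le (p b x y : X) :
    gromovProduct p x y - dist p b ≤ gromovProduct b x y := by
  unfold gromovProduct
  linarith [dist_triangle x b p, dist_triangle y b p, dist_comm p b]

theorem dist_eq_sub_gromovProduct (b x y : X) :
    dist x y = dist x b + dist y b - 2 * gromovProduct b x y := by
  unfold gromovProduct
  ring

theorem IsDeltaHyperbolic.nonneg {δ : ℝ} (h : IsDeltaHyperbolic X δ) (x : X) : 0 ≤ δ := by
  have := h x x x x
  simp only [gromovProduct, dist_self, min_self] at this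
  linarith

theorem IsDeltaHyperbolic.sub_le_gromovProduct {δ : ℝ} (h : IsDeltaHyperbolic X δ)
    {b x y z : X} {c : ℝ} (hxy : c ≤ gromovProduct b x y) (hyz : c ≤ gromovProduct b y z) :
    c - δ ≤ gromovProduct b x z :=
  (sub_le_sub_right (le_min hxy hyz) δ).trans (h b x z y)

theorem IsGeodesicRay.dist_zero {γ : ℝ → X} (hγ : IsGeodesicRay γ) {t : ℝ} (ht : 0 ≤ t) :
    dist (γ t) (γ 0) = t := by
  rw [hγ t 0 ht le_rfl, sub_zero, abs_of_nonneg ht]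

theorem IsGeodesicRay.sub_dist_le_gromovProduct {γ : ℝ → X} (hγ : IsGeodesicRay γ) (b : X)
    {s m : ℝ} (hs : 0 ≤ s) (hsm : s ≤ m) :
    s - dist b (γ 0) ≤ gromovProduct b (γ m) (γ s) := by
  have hms : dist (γ m) (γ s) = m - s := by
    rw [hγ m s (hs.trans hsm) hs, abs_of_nonneg (sub_nonneg.2 hsm)]
  unfold gromovProduct
  linarith [hγ.dist_zero hs, hγ.dist_zero (hs.trans hsm), dist_triangle (γ m) b (γ 0),
    dist_triangle (γ s) b (γ 0)]

theorem IsDeltaHyperbolic.dist_geodesicRay_le {δ : ℝ} (hhyp : IsDeltaHyperbolic X δ)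
    {γ : ℝ → X} (hγ : IsGeodesicRay γ) {b a y : X} {t m : ℝ} (ht : 0 ≤ t) (htm : t ≤ m)
    (hab : dist b a = t) (hbtw : dist b a + dist a y = dist b y)
    (hy : t ≤ gromovProduct b y (γ m)) :
    dist a (γ t) ≤ 3 * dist b (γ 0) + 4 * δ := by
  set k := dist b (γ 0)
  have hδ := hhyp.nonneg b
  have hay : gromovProduct b a y = t := by
    unfold gromovProduct
    linarith [dist_comm a b, dist_comm y b]
  have hyt : t - k - δ ≤ gromovProduct b y (γ t) :=
    hhyp.sub_le_gromovProduct (by linarith [dist_nonneg (x := b) (y := γ 0)])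
      (hγ.sub_dist_le_gromovProduct b ht htm)
  have hat : t - k - δ - δ ≤ gromovProduct b a (γ t) :=
    hhyp.sub_le_gromovProduct (by linarith [dist_nonneg (x := b) (y := γ 0)]) hyt
  rw [dist_eq_sub_gromovProduct b]
  linarith [dist_triangle (γ t) (γ 0) b, hγ.dist_zero ht, dist_comm a b, dist_comm (γ 0) b]

theorem StronglyAsymptotic.tendsto_comp {σ γ : ℝ → X} (hσγ : StronglyAsymptotic σ γ)
    {h : X → ℝ} {K : ℝ≥0} (hh : LipschitzWith K h) {B : ℝ}
    (hB : Tendsto (h ∘ γ) atTop (𝓝 B)) : Tendsto (h ∘ σ) atTop (𝓝 B) := by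
  obtain ⟨T, S, -, -, hTS⟩ := hσγ
  have hγS : Tendsto (fun t => h (γ (t + S))) atTop (𝓝 B) :=
    hB.comp (tendsto_atTop_add_const_right _ S tendsto_id)
  have hdiff : Tendsto (fun t => h (σ (t + T)) - h (γ (t + S))) atTop (𝓝 0) := by
    refine squeeze_zero_norm (fun t => ?_) (by simpa using hTS.const_mul (K : ℝ))
    rw [← dist_eq_norm]
    exact hh.dist_le_mul _ _
  rw [← map_add_atTop_eq T, tendsto_map'_iff]
  simpa [Function.comp_def] using hdiff.add hγS

theorem IsGeodesicSpace.exists_lipschitzWith_segment (hX : IsGeodesicSpace X) (x y : X) :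
    ∃ c : ℝ → X, LipschitzWith 1 c ∧ c 0 = x ∧
      (∀ s ∈ Set.Icc 0 (dist x y), ∀ t ∈ Set.Icc 0 (dist x y), dist (c s) (c t) = |s - t|) ∧
      ∀ t, dist x (c t) + dist (c t) y = dist x y := by
  obtain ⟨g, hg0, hgy, hg⟩ := hX x y
  have hD : 0 ≤ dist x y := dist_nonneg
  have hiso : Isometry fun s : Set.Icc 0 (dist x y) => g s :=
    Isometry.of_dist_eq fun s t => (hg s s.2 t t.2).trans (Real.dist_eq s t).symm
  have hbtw : ∀ s ∈ Set.Icc 0 (dist x y), dist x (g s) + dist (g s) y = dist x y := by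
    intro s hs
    have h0 := hg 0 ⟨le_rfl, hD⟩ s hs
    have hsy := hg s hs _ ⟨hD, le_rfl⟩
    rw [hg0] at h0
    rw [hgy] at hsy
    rw [h0, hsy, zero_sub, abs_neg, abs_of_nonneg hs.1, abs_of_nonpos (sub_nonpos.2 hs.2)]
    ring
  refine ⟨fun t => g (Set.projIcc 0 (dist x y) hD t), ?_, by simp [hg0], fun s hs t ht => ?_,
    fun t => hbtw _ (Set.projIcc 0 (dist x y) hD t).2⟩
  · simpa [Function.comp_def] using hiso.lipschitz.comp (LipschitzWith.projIcc hD)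
  · simp [Set.projIcc_of_mem hD hs, Set.projIcc_of_mem hD ht, hg s hs t ht]

theorem cauchySeq_of_lipschitzWith_of_forall_rat {u : ℕ → ℝ → X}
    (hu : ∀ k, LipschitzWith 1 (u k)) (hq : ∀ q : ℚ, CauchySeq fun k => u k q) (t : ℝ) :
    CauchySeq fun k => u k t := by
  refine Metric.cauchySeq_iff.2 fun ε hε => ?_
  obtain ⟨q, hqt, htq⟩ := exists_rat_btwn (show t - ε / 3 < t by linarith)
  obtain ⟨N, hN⟩ := Metric.cauchySeq_iff.1 (hq q) (ε / 3) (by positivity)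
  have hclose : ∀ k, dist (u k t) (u k q) ≤ ε / 3 := fun k => by
    have := (hu k).dist_le_mul t q
    rw [NNReal.coe_one, one_mul, Real.dist_eq, abs_of_pos (by linarith)] at this
    linarith
  refine ⟨N, fun m hm n hn => ?_⟩
  calc dist (u m t) (u n t)
      ≤ dist (u m t) (u m q) + dist (u m q) (u n q) + dist (u n q) (u n t) :=
        dist_triangle4 _ _ _ _
    _ < ε := by linarith [hclose m, hclose n, dist_comm (u n q) (u n t), hN m hm n hn]

/-- Pointwise Arzelà–Ascoli, through a diagonal subsequence on the rationals. -/
theorem exists_strictMono_tendsto_of_lipschitzWith [ProperSpace X] {v : ℕ → ℝ → X} {b : X}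
    (hv : ∀ n, LipschitzWith 1 (v n)) (hb : ∀ n, v n 0 = b) :
    ∃ φ : ℕ → ℕ, StrictMono φ ∧ ∃ σ : ℝ → X, ∀ t, Tendsto (fun k => v (φ k) t) atTop (𝓝 (σ t)) := by
  have hmem : ∀ n, (fun q : ℚ => v n q) ∈ Set.pi Set.univ fun q : ℚ => closedBall b |(q : ℝ)| :=
    fun n q _ => by
      have := (hv n).dist_le_mul q 0
      rwa [hb, NNReal.coe_one, one_mul, Real.dist_0_eq_abs] at this
  obtain ⟨_, -, φ, hφ, hlim⟩ :=
    (isCompact_univ_pi fun q => isCompact_closedBall b _).tendsto_subseq hmem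
  have hcauchy := cauchySeq_of_lipschitzWith_of_forall_rat (fun k => hv (φ k))
    fun q => (tendsto_pi_nhds.1 hlim q).cauchySeq
  choose σ hσ using fun t => cauchySeq_tendsto_of_complete (hcauchy t)
  exact ⟨φ, hφ, σ, hσ⟩

theorem isGeodesicRay_of_tendsto {v : ℕ → ℝ → X} {T : ℕ → ℝ} {σ : ℝ → X}
    (hT : Tendsto T atTop atTop)
    (hv : ∀ n, ∀ s ∈ Set.Icc 0 (T n), ∀ t ∈ Set.Icc 0 (T n), dist (v n s) (v n t) = |s - t|)
    (hσ : ∀ t, Tendsto (fun n => v n t) atTop (𝓝 (σ t))) : IsGeodesicRay σ := by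
  intro s t hs ht
  refine tendsto_nhds_unique ((hσ s).dist (hσ t)) (tendsto_const_nhds.congr' ?_)
  filter_upwards [hT.eventually_ge_atTop (max s t)] with n hn
  exact (hv n s ⟨hs, (le_max_left s t).trans hn⟩ t ⟨ht, (le_max_right s t).trans hn⟩).symm

section RayEnd

/-- `w n` converges to the boundary point `γ(∞)`, seen from the base point `b`. -/
def TendstoRayEnd (b : X) (w : ℕ → X) (γ : ℝ → X) : Prop :=
  Tendsto (fun q : ℕ × ℝ => gromovProduct b (w q.1) (γ q.2)) (atTop ×ˢ atTop) atTop

variable {b : X} {w : ℕ → X} {γ : ℝ → X}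

theorem tendstoRayEnd_of_forall_le
    (h : ∀ C > (0 : ℝ), ∃ N : ℕ, ∀ n ≥ N, ∀ m : ℝ, (N : ℝ) ≤ m →
      C ≤ gromovProduct b (w n) (γ m)) :
    TendstoRayEnd b w γ := by
  refine tendsto_atTop.2 fun C => ?_
  obtain ⟨N, hN⟩ := h (max C 1) (lt_max_of_lt_right one_pos)
  filter_upwards [(eventually_ge_atTop N).prod_mk (eventually_ge_atTop (N : ℝ))] with q hq
  exact (le_max_left C 1).trans (hN q.1 hq.1 q.2 hq.2)

theorem TendstoRayEnd.change_base (h : TendstoRayEnd b w γ) (b' : X) : TendstoRayEnd b' w γ := by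
  refine tendsto_atTop_mono (fun q => ?_) (tendsto_atTop_add_const_right _ (-dist b b') h)
  simpa only [sub_eq_add_neg] using gromovProduct_sub_dist_le b b' _ _

theorem TendstoRayEnd.comp_tendsto (h : TendstoRayEnd b w γ) {ns : ℕ → ℕ}
    (hns : Tendsto ns atTop atTop) : TendstoRayEnd b (w ∘ ns) γ :=
  h.comp (hns.prodMap tendsto_id)

theorem TendstoRayEnd.eventually_exists_le (h : TendstoRayEnd b w γ) (t : ℝ) :
    ∀ᶠ n in atTop, ∃ m, t ≤ m ∧ t ≤ gromovProduct b (w n) (γ m) :=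
  (h.eventually_ge_atTop t).curry.mono fun _ hn => ((eventually_ge_atTop t).and hn).exists

theorem TendstoRayEnd.tendsto_dist (h : TendstoRayEnd b w γ) :
    Tendsto (fun n => dist b (w n)) atTop atTop :=
  tendsto_atTop.2 fun t => (h.eventually_exists_le t).mono fun n ⟨m, _, hm⟩ =>
    hm.trans (gromovProduct_le_dist b (w n) (γ m))

theorem TendstoRayEnd.exists_limit_ray [ProperSpace X] (hX : IsGeodesicSpace X) {δ : ℝ}
    (hhyp : IsDeltaHyperbolic X δ) (hγ : IsGeodesicRay γ) (hw : TendstoRayEnd b w γ) :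
    ∃ φ : ℕ → ℕ, StrictMono φ ∧ ∃ σ : ℝ → X, IsGeodesicRay σ ∧ AsymptoticRays σ γ ∧
      ∃ v : ℕ → ℝ → X, (∀ k t, dist b (v k t) + dist (v k t) (w (φ k)) = dist b (w (φ k))) ∧
        ∀ t, Tendsto (fun k => v k t) atTop (𝓝 (σ t)) := by
  choose c hc hc0 hciso hcbtw using fun n => hX.exists_lipschitzWith_segment b (w n)
  obtain ⟨φ, hφ, σ, hσ⟩ := exists_strictMono_tendsto_of_lipschitzWith hc hc0
  refine ⟨φ, hφ, σ, isGeodesicRay_of_tendsto (hw.tendsto_dist.comp hφ.tendsto_atTop)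
    (fun k => hciso (φ k)) hσ, ⟨3 * dist b (γ 0) + 4 * δ, fun t ht => ?_⟩,
    fun k => c (φ k), fun k t => hcbtw (φ k) t, hσ⟩
  refine le_of_tendsto ((hσ t).dist tendsto_const_nhds) ?_
  filter_upwards [hφ.tendsto_atTop.eventually (hw.eventually_exists_le t)] with k ⟨m, htm, hm⟩
  have htD : t ≤ dist b (w (φ k)) := hm.trans (gromovProduct_le_dist _ _ _)
  have hdist : dist b (c (φ k) t) = t := by
    have := hciso (φ k) 0 ⟨le_rfl, ht.trans htD⟩ t ⟨ht, htD⟩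
    rwa [hc0, zero_sub, abs_neg, abs_of_nonneg ht] at this
  exact hhyp.dist_geodesicRay_le hγ ht htm hdist (hcbtw (φ k) t) hm

theorem TendstoRayEnd.eventually_lt_of_tendsto_rays [ProperSpace X] (hX : IsGeodesicSpace X)
    {δ : ℝ} (hhyp : IsDeltaHyperbolic X δ) (hγ : IsGeodesicRay γ) (hw : TendstoRayEnd b w γ)
    {h : X → ℝ} (hh : Continuous h) (hbtw : ∀ a y, dist b a + dist a y = dist b y → h y ≤ h a)
    {B : ℝ} (hrays : ∀ σ, IsGeodesicRay σ → AsymptoticRays σ γ → Tendsto (h ∘ σ) atTop (𝓝 B)) :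
    ∀ c > B, ∀ᶠ n in atTop, h (w n) < c := by
  intro c hc
  by_contra hfreq
  obtain ⟨ns, hns, hge⟩ := extraction_of_frequently_atTop (not_eventually.1 hfreq)
  obtain ⟨φ, -, σ, hσ, hσγ, v, hv, hvσ⟩ :=
    (hw.comp_tendsto hns.tendsto_atTop).exists_limit_ray hX hhyp hγ
  obtain ⟨t, ht⟩ := ((hrays σ hσ hσγ).eventually (gt_mem_nhds hc)).exists
  obtain ⟨k, hk⟩ := (((hh.tendsto _).comp (hvσ t)).eventually (gt_mem_nhds ht)).exists
  exact hge (φ k) ((hbtw _ _ (hv k t)).trans_lt hk)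

end RayEnd

theorem dist_sub_dist_le_of_dist_add_dist_eq {p a y : X} (z : X)
    (h : dist p a + dist a y = dist p y) : dist z y - dist y p ≤ dist z a - dist a p := by
  linarith [dist_triangle z a y, dist_comm a p, dist_comm y p]

theorem dist_sub_dist_le_of_dist_add_dist_eq' {z a y : X} (p : X)
    (h : dist z a + dist a y = dist z y) : dist z a - dist a p ≤ dist z y - dist y p := by
  linarith [dist_triangle y a p, dist_comm a y]

end Hyperbolic

theorem tendsto_busemann_of_convergence_to_boundary_general {X : Type*} [MetricSpace X]
    [ProperSpace X] (hX : IsGeodesicSpace X)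
    (δ : ℝ) (hhyp : IsDeltaHyperbolic X δ)
    (γ : ℝ → X) (hγ : IsGeodesicRay γ)
    (happ : ∀ σ₁ σ₂ : ℝ → X, IsGeodesicRay σ₁ → IsGeodesicRay σ₂ →
      AsymptoticRays σ₁ γ → AsymptoticRays σ₂ γ → StronglyAsymptotic σ₁ σ₂)
    (p z : X) (w : ℕ → X)
    (hw : ∀ C > (0 : ℝ), ∃ N : ℕ, ∀ n ≥ N, ∀ m : ℝ, (N : ℝ) ≤ m →
      C ≤ gromovProduct p (w n) (γ m))
    (B : ℝ)
    (hB : Tendsto (fun t => dist z (γ t) - dist (γ t) p) atTop (nhds B)) :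
    Tendsto (fun n => dist z (w n) - dist (w n) p) atTop (nhds B) := by
  set f : X → ℝ := fun x => dist z x - dist x p
  have hf : LipschitzWith 2 f := by
    simpa [one_add_one_eq_two] using (LipschitzWith.dist_right z).sub (LipschitzWith.dist_left p)
  have hrays : ∀ σ, IsGeodesicRay σ → AsymptoticRays σ γ → Tendsto (f ∘ σ) atTop (𝓝 B) :=
    fun σ hσ hσγ => (happ σ γ hσ hγ hσγ ⟨0, fun t _ => by simp⟩).tendsto_comp hf hB
  have hwp : TendstoRayEnd p w γ := tendstoRayEnd_of_forall_le hw
  refine tendsto_order.2 ⟨fun c hc => ?_, hwp.eventually_lt_of_tendsto_rays hX hhyp hγ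
    hf.continuous (fun _ _ => dist_sub_dist_le_of_dist_add_dist_eq z) hrays⟩
  have hlower := (hwp.change_base z).eventually_lt_of_tendsto_rays hX hhyp hγ hf.continuous.neg
    (fun _ _ hay => neg_le_neg (dist_sub_dist_le_of_dist_add_dist_eq' p hay))
    (fun σ hσ hσγ => (hrays σ hσ hσγ).neg) (-c) (neg_lt_neg hc)
  exact hlower.mono fun _ hn => neg_lt_neg_iff.1 hn

/-- In a proper geodesic δ-hyperbolic space, if any two geodesic rays
asymptotic to γ are strongly asymptotic to each other, and (w_n) converges to the
boundary point of γ, then d(z, w_n) - d(w_n, p) → B_γ(z, p). -/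
theorem tendsto_busemann_of_convergence_to_boundary {X : Type*} [MetricSpace X]
    [ProperSpace X] (hX : IsGeodesicSpace X)
    (δ : ℝ) (hδ : 0 ≤ δ) (hhyp : IsDeltaHyperbolic X δ)
    (γ : ℝ → X) (hγ : IsGeodesicRay γ)
    (happ : ∀ σ₁ σ₂ : ℝ → X, IsGeodesicRay σ₁ → IsGeodesicRay σ₂ →
      AsymptoticRays σ₁ γ → AsymptoticRays σ₂ γ → StronglyAsymptotic σ₁ σ₂)
    (p z : X) (w : ℕ → X)
    (hw : ∀ C > (0 : ℝ), ∃ N : ℕ, ∀ n ≥ N, ∀ m : ℝ, (N : ℝ) ≤ m →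
      C ≤ gromovProduct p (w n) (γ m))
    (B : ℝ)
    (hB : Tendsto (fun t => dist z (γ t) - dist (γ t) p) atTop (nhds B)) :
    Tendsto (fun n => dist z (w n) - dist (w n) p) atTop (nhds B) :=
  tendsto_busemann_of_convergence_to_boundary_general hX δ hhyp γ hγ happ p z w hw B hB
end

section
/- Let (X,d) be a proper geodesic metric space which is δ-hyperbolic for some δ ≥ 0 and has approaching geodesics, i.e. any two asymptotic geodesic rays are strongly asymptotic. Let p ∈ X and let (γ_k) be a sequence of geodesic rays with γ_k(0) = p converging uniformly on compact subsets of [0,∞) to a map γ (necessarily a geodesic ray with γ(0) = p). Then for every z ∈ X, lim_{k→∞} B_{γ_k}(z,p) = B_γ(z,p), and the convergence is uniform on compact subsets of X. -/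
/-! The bound `B_{γ_k}(z) ≤ d(z, γ_k(s)) - s` and convergence of `γ_k(s)` give
`limsup B_{γ_k}(z) ≤ B_γ(z)`. For the lower bound suppose `B_{γ_k}(z) ≤ b` along a subsequence.
Geodesics from `z` to far points `γ_k(t_k)` almost realizing `B_{γ_k}(z)` accumulate, by
properness, on a ray `σ` from `z` with `d(σ(u), p) ≥ u - b`. Thinness of the triangles
`p, z, γ_k(t_k)` keeps `σ` within `3 d(z,p) + 4δ` of `γ`, so by approaching geodesics
`d(γ(t+T), σ(t+S)) → 0`, which forces `B_γ(z) ≤ S - T ≤ b`. Busemann functions are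
1-Lipschitz, so pointwise convergence is uniform on compact sets. -/

open Filter Metric Topology

section GeodesicRay

variable {X : Type*} [MetricSpace X] {c : ℝ → X} {p z : X} {b s t : ℝ}

lemma IsGeodesicRay.dist_apply_of_le (hc : IsGeodesicRay c) (hs : 0 ≤ s) (hst : s ≤ t) :
    dist (c s) (c t) = t - s := by
  rw [hc s t hs (hs.trans hst), abs_of_nonpos (by linarith), neg_sub]

lemma IsGeodesicRay.dist_eq_of_apply_zero (hc : IsGeodesicRay c) (h0 : c 0 = p) (ht : 0 ≤ t) :
    dist (c t) p = t := by
  rw [← h0, dist_comm, hc.dist_apply_of_le le_rfl ht, sub_zero]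

lemma IsGeodesicRay.busemann_le (hc : IsGeodesicRay c) (h0 : c 0 = p)
    (hb : Tendsto (fun t => dist z (c t) - dist (c t) p) atTop (𝓝 b)) (ht : 0 ≤ t) :
    b ≤ dist z (c t) - t := by
  refine le_of_tendsto hb ?_
  filter_upwards [eventually_ge_atTop t] with s hts
  linarith [dist_triangle z (c t) (c s), hc.dist_apply_of_le ht hts,
    hc.dist_eq_of_apply_zero h0 (ht.trans hts)]

end GeodesicRay

lemma lipschitzWith_one_of_tendsto_dist_sub {X ι : Type*} [PseudoMetricSpace X] {l : Filter ι}
    [l.NeBot] {c : ι → X} {g : ι → ℝ} {f : X → ℝ}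
    (hf : ∀ x, Tendsto (fun i => dist x (c i) - g i) l (𝓝 (f x))) : LipschitzWith 1 f :=
  LipschitzWith.of_le_add fun x y => le_of_tendsto_of_tendsto' (hf x) ((hf y).add_const _)
    fun i => by linarith [dist_triangle x y (c i)]

lemma tendstoUniformlyOn_of_lipschitzWith {ι α β : Type*} [PseudoMetricSpace α]
    [PseudoMetricSpace β] {l : Filter ι} {F : ι → α → β} {f : α → β} {L : NNReal}
    (hF : ∀ i, LipschitzWith L (F i)) (h : ∀ x, Tendsto (fun i => F i x) l (𝓝 (f x)))
    {K : Set α} (hK : IsCompact K) : TendstoUniformlyOn F f l K := by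
  have hunif := (EquicontinuousOn.tendsto_uniformOnFun_iff_pi (𝔖 := {K | IsCompact K})
    (fun _ hK => hK) (Set.sUnion_eq_univ_iff.2 fun x => ⟨{x}, isCompact_singleton, rfl⟩)
    (fun K _ => (LipschitzWith.uniformEquicontinuous F L hF).equicontinuous.equicontinuousOn K)
    l f).2 (tendsto_pi_nhds.2 h)
  exact UniformOnFun.tendsto_iff_tendstoUniformlyOn.1 hunif K hK

lemma exists_tendsto_ultrafilter_of_lipschitzWith {ι α X : Type*} [PseudoMetricSpace α]
    [MetricSpace X] [ProperSpace X] {f : ι → α → X} {a : α} {z : X}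
    (hf : ∀ i, LipschitzWith 1 (f i)) (ha : ∀ i, f i a = z) (U : Ultrafilter ι) :
    ∃ σ : α → X, ∀ u, Tendsto (fun i => f i u) U (𝓝 (σ u)) := by
  have hmem : ∀ i, f i ∈ Set.univ.pi fun u => closedBall z (dist u a) := fun i u _ => by
    simpa [ha i] using (hf i).dist_le_mul u a
  have hU : (U.map f : Filter (α → X)) ≤ 𝓟 (Set.univ.pi fun u => closedBall z (dist u a)) := by
    rw [Ultrafilter.coe_map, le_principal_iff]
    exact Filter.mem_map.2 (univ_mem' hmem)
  obtain ⟨σ, -, hσ⟩ :=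
    (isCompact_univ_pi fun u => isCompact_closedBall z (dist u a)).ultrafilter_le_nhds _ hU
  exact ⟨σ, tendsto_pi_nhds.1 hσ⟩

section Geodesic

variable {X : Type*} [MetricSpace X]

lemma IsGeodesicSpace.exists_lipschitzWith_geodesic (hX : IsGeodesicSpace X) (x y : X) :
    ∃ c : ℝ → X, LipschitzWith 1 c ∧ c 0 = x ∧ c (dist x y) = y ∧
      ∀ s ∈ Set.Icc 0 (dist x y), ∀ t ∈ Set.Icc 0 (dist x y), dist (c s) (c t) = |s - t| := by
  obtain ⟨c, hc0, hcy, hc⟩ := hX x y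
  let e := Set.projIcc 0 (dist x y) dist_nonneg
  refine ⟨fun s => c (e s), LipschitzWith.of_dist_le_mul fun s t => ?_, ?_, ?_, fun s hs t ht => ?_⟩
  · rw [hc _ (e s).2 _ (e t).2, NNReal.coe_one, one_mul]
    exact (LipschitzWith.projIcc dist_nonneg).dist_le_mul s t |>.trans_eq (one_mul _)
  · simpa [e, Set.projIcc_left] using hc0
  · simpa [e, Set.projIcc_right] using hcy
  · simpa [e, Set.projIcc_of_mem _ hs, Set.projIcc_of_mem _ ht] using hc s hs t ht

theorem IsGeodesicSpace.exists_geodesicRay_limit [ProperSpace X] (hX : IsGeodesicSpace X) (z : X)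
    {x : ℕ → X} (hx : Tendsto (fun j => dist z (x j)) atTop atTop) (U : Ultrafilter ℕ)
    (hU : (U : Filter ℕ) ≤ atTop) :
    ∃ σ : ℝ → X, IsGeodesicRay σ ∧ σ 0 = z ∧ ∀ u, 0 ≤ u → ∃ y : ℕ → X,
      Tendsto y U (𝓝 (σ u)) ∧
      ∀ᶠ j in U, dist z (y j) = u ∧ dist z (y j) + dist (y j) (x j) = dist z (x j) := by
  choose c hcL hc0 hcx hc using fun j => hX.exists_lipschitzWith_geodesic z (x j)
  obtain ⟨σ, hσ⟩ := exists_tendsto_ultrafilter_of_lipschitzWith hcL hc0 U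
  have hlong : ∀ u, ∀ᶠ j in U, u ≤ dist z (x j) := fun u => hU (hx.eventually_ge_atTop u)
  have hseg : ∀ u v, 0 ≤ u → 0 ≤ v → ∀ᶠ j in U, dist (c j u) (c j v) = |u - v| :=
    fun u v hu hv => by
      filter_upwards [hlong u, hlong v] with j hju hjv using hc j u ⟨hu, hju⟩ v ⟨hv, hjv⟩
  refine ⟨σ, fun u v hu hv => ?_, ?_, fun u hu => ⟨fun j => c j u, hσ u, ?_⟩⟩
  · exact tendsto_nhds_unique ((hσ u).dist (hσ v)) (tendsto_const_nhds.congr' <|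
      (hseg u v hu hv).mono fun j hj => hj.symm)
  · exact tendsto_nhds_unique (hσ 0) (by simp only [hc0]; exact tendsto_const_nhds)
  · filter_upwards [hlong u] with j hj
    have hzu := hc j 0 ⟨le_rfl, hu.trans hj⟩ u ⟨hu, hj⟩
    have hux := hc j u ⟨hu, hj⟩ _ ⟨hu.trans hj, le_rfl⟩
    rw [hc0, zero_sub, abs_neg, abs_of_nonneg hu] at hzu
    rw [hcx, abs_of_nonpos (by linarith), neg_sub] at hux
    exact ⟨hzu, by rw [hzu, hux]; ring⟩

end Geodesic

section Hyperbolic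

variable {X : Type*} [MetricSpace X] {δ : ℝ}

lemma IsDeltaHyperbolic.gromovProduct_le_of_dist_add_dist_eq (hX : IsDeltaHyperbolic X δ)
    {p x y z : X} (hy : dist z y + dist y x = dist z x) (hzy : dist z p + δ < dist z y) :
    gromovProduct y p x ≤ δ := by
  have hzx : gromovProduct y z x = 0 := by
    unfold gromovProduct; linarith [dist_comm z y, dist_comm x y]
  have hzp : δ < gromovProduct y z p := by
    unfold gromovProduct; linarith [dist_triangle z p y, dist_comm z y]
  by_contra! hpx
  linarith [hX y z x p, lt_min hzp hpx]

lemma IsDeltaHyperbolic.dist_le_of_gromovProduct_le (hX : IsDeltaHyperbolic X δ) (hδ : 0 ≤ δ)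
    {p x y w : X} (hw : dist p w + dist w x = dist p x) (hpw : dist p w = dist p y)
    (hy : gromovProduct y p x ≤ δ) : dist y w ≤ 4 * δ := by
  have hyx : dist p y - δ ≤ gromovProduct p y x := by
    unfold gromovProduct at hy ⊢; linarith [dist_comm p y, dist_comm x y, dist_comm p x]
  have hxw : gromovProduct p x w = dist p y := by
    unfold gromovProduct; linarith [dist_comm p x, dist_comm p w, dist_comm x w]
  have hyw : dist p y - 2 * δ ≤ gromovProduct p y w := by
    linarith [hX p y w x, le_min hyx (by rw [hxw]; linarith : dist p y - δ ≤ gromovProduct p x w)]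
  unfold gromovProduct at hyw
  linarith [dist_comm p y, dist_comm p w]

lemma IsDeltaHyperbolic.dist_geodesicRay_le_s4 (hX : IsDeltaHyperbolic X δ) (hδ : 0 ≤ δ)
    {c : ℝ → X} (hc : IsGeodesicRay c) {y z : X} {t : ℝ}
    (hy : dist z y + dist y (c t) = dist z (c t)) (hzy : dist z (c 0) + δ < dist z y)
    (ht : dist z (c 0) + dist z y ≤ t) : dist y (c (dist z y)) ≤ dist z (c 0) + 4 * δ := by
  set s := dist (c 0) y
  have hst : s ≤ t := by linarith [dist_triangle (c 0) z y, dist_comm z (c 0)]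
  have hyw : dist y (c s) ≤ 4 * δ := by
    refine hX.dist_le_of_gromovProduct_le hδ (x := c t) ?_ ?_
      (hX.gromovProduct_le_of_dist_add_dist_eq hy hzy)
    · rw [hc.dist_apply_of_le le_rfl dist_nonneg, hc.dist_apply_of_le dist_nonneg hst,
        hc.dist_apply_of_le le_rfl (dist_nonneg.trans hst)]
      ring
    · rw [hc.dist_apply_of_le le_rfl dist_nonneg, sub_zero]
  have hws : dist (c s) (c (dist z y)) ≤ dist z (c 0) := by
    rw [hc s _ dist_nonneg dist_nonneg, abs_sub_le_iff]
    constructor <;> linarith [dist_triangle (c 0) z y, dist_triangle z (c 0) y, dist_comm z (c 0)]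
  linarith [dist_triangle y (c s) (c (dist z y))]

end Hyperbolic

section Busemann

variable {X : Type*} [MetricSpace X] {δ : ℝ} {p z : X} {γk : ℕ → ℝ → X} {γ : ℝ → X}

theorem exists_asymptotic_geodesicRay [ProperSpace X] (hX : IsGeodesicSpace X) (hδ : 0 ≤ δ)
    (hhyp : IsDeltaHyperbolic X δ) (hγk : ∀ k, IsGeodesicRay (γk k)) (hγk0 : ∀ k, γk k 0 = p)
    (hγ : IsGeodesicRay γ) (hγ0 : γ 0 = p)
    (hconv : ∀ u, 0 ≤ u → Tendsto (fun k => γk k u) atTop (𝓝 (γ u)))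
    {t : ℕ → ℝ} (ht : Tendsto t atTop atTop) {b : ℝ}
    (hb : ∀ η > 0, ∀ᶠ k in atTop, dist z (γk k (t k)) - t k ≤ b + η) :
    ∃ σ : ℝ → X, IsGeodesicRay σ ∧ σ 0 = z ∧ AsymptoticRays γ σ ∧
      ∀ u, 0 ≤ u → u - b ≤ dist (σ u) p := by
  have hpx : ∀ᶠ k in atTop, dist p (γk k (t k)) = t k := by
    filter_upwards [ht.eventually_ge_atTop 0] with k hk
    rw [dist_comm, (hγk k).dist_eq_of_apply_zero (hγk0 k) hk]
  have hx : Tendsto (fun k => dist z (γk k (t k))) atTop atTop := by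
    refine tendsto_atTop_mono' _ ?_ (tendsto_atTop_add_const_right _ (-dist z p) ht)
    filter_upwards [hpx] with k hk
    linarith [dist_triangle p z (γk k (t k)), dist_comm p z]
  let U := Ultrafilter.of (atTop : Filter ℕ)
  have hU : (U : Filter ℕ) ≤ atTop := Ultrafilter.of_le _
  obtain ⟨σ, hσ, hσ0, hlim⟩ := hX.exists_geodesicRay_limit z hx U hU
  refine ⟨σ, hσ, hσ0, ⟨3 * dist z p + 4 * δ, fun u hu => ?_⟩, fun u hu => ?_⟩
  · rcases le_or_gt u (dist z p + δ) with hu' | hu'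
    · linarith [dist_triangle4 (γ u) p z (σ u), hγ.dist_eq_of_apply_zero hγ0 hu,
        hσ.dist_eq_of_apply_zero hσ0 hu, dist_comm (σ u) z, dist_comm p z]
    obtain ⟨y, hy, hyseg⟩ := hlim u hu
    refine le_of_tendsto (((hconv u hu).mono_left hU).dist hy) ?_
    filter_upwards [hyseg, hU (ht.eventually_ge_atTop (dist z p + u))] with k ⟨hzy, hseg⟩ htk
    have hfellow := hhyp.dist_geodesicRay_le_s4 hδ (hγk k) hseg (by rwa [hγk0, hzy])
      (by rwa [hγk0, hzy])
    rw [hγk0, hzy, dist_comm] at hfellow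
    linarith [dist_nonneg (x := z) (y := p)]
  · obtain ⟨y, hy, hyseg⟩ := hlim u hu
    refine le_of_forall_pos_le_add fun η hη => ?_
    have hyp : u - b - η ≤ dist (σ u) p := by
      refine ge_of_tendsto (hy.dist tendsto_const_nhds) ?_
      filter_upwards [hyseg, hU (hb η hη), hU hpx] with k ⟨hzy, hseg⟩ hbk hpk
      linarith [dist_triangle p (y k) (γk k (t k)), dist_comm p (y k)]
    linarith

lemma busemann_le_of_stronglyAsymptotic {σ : ℝ → X} {b Bz : ℝ} (hγ : IsGeodesicRay γ)
    (hγ0 : γ 0 = p) (hσ : IsGeodesicRay σ) (hσ0 : σ 0 = z) (hγσ : StronglyAsymptotic γ σ)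
    (hBz : Tendsto (fun t => dist z (γ t) - dist (γ t) p) atTop (𝓝 Bz))
    (hσp : ∀ u, 0 ≤ u → u - b ≤ dist (σ u) p) : Bz ≤ b := by
  obtain ⟨T, S, hT, hS, hlim⟩ := hγσ
  have hBS : Bz - (S - T) ≤ 0 := by
    refine ge_of_tendsto hlim ?_
    filter_upwards [eventually_ge_atTop 0] with t ht
    linarith [hγ.busemann_le hγ0 hBz (by linarith : 0 ≤ t + T),
      dist_triangle z (σ (t + S)) (γ (t + T)), hσ.dist_eq_of_apply_zero hσ0 (by linarith : 0 ≤ t + S),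
      dist_comm z (σ (t + S)), dist_comm (σ (t + S)) (γ (t + T))]
  have hSb : S - T - b ≤ 0 := by
    refine ge_of_tendsto hlim ?_
    filter_upwards [eventually_ge_atTop 0] with t ht
    linarith [hσp (t + S) (by linarith), dist_triangle (σ (t + S)) (γ (t + T)) p,
      hγ.dist_eq_of_apply_zero hγ0 (by linarith : 0 ≤ t + T), dist_comm (σ (t + S)) (γ (t + T))]
  linarith

theorem busemann_le_of_frequently_le [ProperSpace X] (hX : IsGeodesicSpace X) (hδ : 0 ≤ δ)
    (hhyp : IsDeltaHyperbolic X δ) (happ : ApproachingGeodesics X)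
    (hγk : ∀ k, IsGeodesicRay (γk k)) (hγk0 : ∀ k, γk k 0 = p)
    (hγ : IsGeodesicRay γ) (hγ0 : γ 0 = p)
    (hconv : ∀ u, 0 ≤ u → Tendsto (fun k => γk k u) atTop (𝓝 (γ u))) {B : ℕ → ℝ} {Bz b : ℝ}
    (hB : ∀ k, Tendsto (fun t => dist z (γk k t) - dist (γk k t) p) atTop (𝓝 (B k)))
    (hBz : Tendsto (fun t => dist z (γ t) - dist (γ t) p) atTop (𝓝 Bz))
    (hfreq : ∃ᶠ k in atTop, B k ≤ b) : Bz ≤ b := by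
  obtain ⟨ψ, hψ, hψb⟩ := extraction_of_frequently_atTop hfreq
  have htimes : ∀ j : ℕ, ∃ t, (j : ℝ) ≤ t ∧ dist z (γk (ψ j) t) - t ≤ b + 1 / (j + 1) := by
    intro j
    obtain ⟨t, hzt, hjt⟩ := (((hB (ψ j)).eventually (gt_mem_nhds
      (lt_add_of_pos_right _ Nat.one_div_pos_of_nat))).and (eventually_ge_atTop (j : ℝ))).exists
    refine ⟨t, hjt, ?_⟩
    rw [(hγk _).dist_eq_of_apply_zero (hγk0 _) ((Nat.cast_nonneg j).trans hjt)] at hzt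
    exact (hzt.trans_le (add_le_add_left (hψb j) _)).le
  choose t hjt hzt using htimes
  obtain ⟨σ, hσ, hσ0, hγσ, hσp⟩ := exists_asymptotic_geodesicRay hX hδ hhyp (fun j => hγk (ψ j))
    (fun j => hγk0 (ψ j)) hγ hγ0 (fun u hu => (hconv u hu).comp hψ.tendsto_atTop)
    (tendsto_atTop_mono hjt tendsto_natCast_atTop_atTop) (b := b) fun η hη => by
      filter_upwards [tendsto_one_div_add_atTop_nhds_zero_nat.eventually (gt_mem_nhds hη)]
        with j hj
      linarith [hzt j]
  exact busemann_le_of_stronglyAsymptotic hγ hγ0 hσ hσ0 (happ γ σ hγ hσ hγσ) hBz hσp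

theorem tendsto_busemann_of_rays_tendsto [ProperSpace X] (hX : IsGeodesicSpace X) (hδ : 0 ≤ δ)
    (hhyp : IsDeltaHyperbolic X δ) (happ : ApproachingGeodesics X)
    (hγk : ∀ k, IsGeodesicRay (γk k)) (hγk0 : ∀ k, γk k 0 = p)
    (hγ : IsGeodesicRay γ) (hγ0 : γ 0 = p)
    (hconv : ∀ u, 0 ≤ u → Tendsto (fun k => γk k u) atTop (𝓝 (γ u))) {B : ℕ → ℝ} {Bz : ℝ}
    (hB : ∀ k, Tendsto (fun t => dist z (γk k t) - dist (γk k t) p) atTop (𝓝 (B k)))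
    (hBz : Tendsto (fun t => dist z (γ t) - dist (γ t) p) atTop (𝓝 Bz)) :
    Tendsto B atTop (𝓝 Bz) := by
  refine tendsto_order.2 ⟨fun a ha => ?_, fun a ha => ?_⟩
  · by_contra h
    have := busemann_le_of_frequently_le hX hδ hhyp happ hγk hγk0 hγ hγ0 hconv hB hBz
      ((not_eventually.1 h).mono fun k hk => not_lt.1 hk)
    linarith
  · obtain ⟨s, hs, hs0⟩ := ((hBz.eventually (gt_mem_nhds ha)).and (eventually_ge_atTop 0)).exists
    rw [hγ.dist_eq_of_apply_zero hγ0 hs0] at hs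
    filter_upwards [Metric.tendsto_nhds.1 (hconv s hs0) _ (sub_pos.2 hs)] with k hk
    linarith [(hγk k).busemann_le (hγk0 k) (hB k) hs0, dist_triangle z (γ s) (γk k s),
      dist_comm (γk k s) (γ s)]

end Busemann

/-- In a proper geodesic δ-hyperbolic space with approaching
geodesics, if geodesic rays γ_k starting at p converge uniformly on compacts of
[0,∞) to γ, then the Busemann functions B_{γ_k}(·, p) converge to B_γ(·, p)
pointwise and uniformly on compact subsets of X. -/
theorem busemann_tendsto_of_rays_tendsto {X : Type*} [MetricSpace X] [ProperSpace X]
    (hX : IsGeodesicSpace X)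
    (δ : ℝ) (hδ : 0 ≤ δ) (hhyp : IsDeltaHyperbolic X δ)
    (happ : ApproachingGeodesics X)
    (p : X) (γk : ℕ → ℝ → X) (hγk : ∀ k, IsGeodesicRay (γk k))
    (hγk0 : ∀ k, γk k 0 = p)
    (γ : ℝ → X) (hγ : IsGeodesicRay γ) (hγ0 : γ 0 = p)
    (hconv : ∀ K : Set ℝ, IsCompact K → K ⊆ Set.Ici (0 : ℝ) →
      TendstoUniformlyOn (fun k t => γk k t) γ atTop K)
    (B : ℕ → X → ℝ)
    (hB : ∀ k z, Tendsto (fun t => dist z (γk k t) - dist (γk k t) p) atTop (nhds (B k z)))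
    (Bγ : X → ℝ)
    (hBγ : ∀ z, Tendsto (fun t => dist z (γ t) - dist (γ t) p) atTop (nhds (Bγ z))) :
    (∀ z : X, Tendsto (fun k => B k z) atTop (nhds (Bγ z))) ∧
    (∀ K : Set X, IsCompact K → TendstoUniformlyOn (fun k z => B k z) Bγ atTop K) := by
  have hpt : ∀ u, 0 ≤ u → Tendsto (fun k => γk k u) atTop (𝓝 (γ u)) := fun u hu =>
    (hconv {u} isCompact_singleton (Set.singleton_subset_iff.2 hu)).tendsto_at rfl
  have hlim : ∀ z, Tendsto (fun k => B k z) atTop (𝓝 (Bγ z)) := fun z =>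
    tendsto_busemann_of_rays_tendsto hX hδ hhyp happ hγk hγk0 hγ hγ0 hpt (hB · z) (hBγ z)
  exact ⟨hlim, fun K hK => tendstoUniformlyOn_of_lipschitzWith
    (fun k => lipschitzWith_one_of_tendsto_dist_sub (hB k)) hlim hK⟩
end

section
/- Let (X,d) be a metric space, γ : [0,∞) → X a geodesic ray, p ∈ X, and R > 0. Let (x_n) be a sequence with d(x_n,p) → ∞ such that for each n there exists t_n ≥ 0 with d(x_n, γ(t_n)) < R (i.e. x_n lies in the geodesic region A(γ,R)). Then B_γ(x_n, p) → −∞ as n → ∞. -/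
open Filter Metric Topology

/- Along the ray, `d(z, γ τ) - d(γ τ, p)` is bounded, for every `τ ≥ s`, by
`d(z, γ s) - s + d(γ 0, p)`; and `s` itself is at least `d(z, p) - d(z, γ s) - d(γ 0, p)`.
Hence `B_γ(z, p) ≤ 2 d(z, γ s) + 2 d(γ 0, p) - d(z, p)`, which tends to `-∞` when
`d(z, γ s) < R` and `d(z, p) → ∞`. -/

namespace IsGeodesicRay

variable {X : Type*} [MetricSpace X] {γ : ℝ → X}

lemma dist_eq_sub (hγ : IsGeodesicRay γ) {s τ : ℝ} (hs : 0 ≤ s) (hsτ : s ≤ τ) :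
    dist (γ s) (γ τ) = τ - s := by
  rw [hγ s τ hs (hs.trans hsτ), abs_of_nonpos (sub_nonpos.mpr hsτ), neg_sub]

lemma dist_sub_dist_le (hγ : IsGeodesicRay γ) (z p : X) {s τ : ℝ} (hs : 0 ≤ s)
    (hsτ : s ≤ τ) :
    dist z (γ τ) - dist (γ τ) p ≤ 2 * dist z (γ s) + 2 * dist (γ 0) p - dist z p := by
  have hzτ : dist z (γ τ) ≤ dist z (γ s) + (τ - s) :=
    hγ.dist_eq_sub hs hsτ ▸ dist_triangle z (γ s) (γ τ)
  have hτp : τ - dist (γ 0) p ≤ dist (γ τ) p := by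
    have := dist_triangle (γ 0) p (γ τ)
    rw [hγ.dist_eq_sub le_rfl (hs.trans hsτ), dist_comm p] at this
    linarith
  have hzp : dist z p ≤ dist z (γ s) + s + dist (γ 0) p := by
    have := dist_triangle4 z (γ s) (γ 0) p
    rw [dist_comm (γ s), hγ.dist_eq_sub le_rfl hs] at this
    linarith
  linarith

lemma le_of_tendsto_dist_sub_dist (hγ : IsGeodesicRay γ) {z p : X} {b : ℝ}
    (hb : Tendsto (fun τ => dist z (γ τ) - dist (γ τ) p) atTop (𝓝 b)) {s : ℝ} (hs : 0 ≤ s) :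
    b ≤ 2 * dist z (γ s) + 2 * dist (γ 0) p - dist z p :=
  le_of_tendsto hb <| (eventually_ge_atTop s).mono fun _ hsτ =>
    hγ.dist_sub_dist_le z p hs hsτ

end IsGeodesicRay

theorem busemann_tendsto_atBot_in_geodesicRegion_general {X : Type*} [MetricSpace X]
    (γ : ℝ → X) (hγ : IsGeodesicRay γ) (p : X) (R : ℝ)
    (x : ℕ → X) (hx : Tendsto (fun n => dist (x n) p) atTop atTop)
    (t : ℕ → ℝ) (ht : ∀ n, 0 ≤ t n) (hxt : ∀ n, dist (x n) (γ (t n)) < R)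
    (Bγ : X → ℝ)
    (hBγ : ∀ z : X, Tendsto (fun τ => dist z (γ τ) - dist (γ τ) p) atTop (nhds (Bγ z))) :
    Tendsto (fun n => Bγ (x n)) atTop atBot := by
  have hbound : ∀ n, Bγ (x n) ≤ 2 * R + 2 * dist (γ 0) p + -dist (x n) p := fun n => by
    have := hγ.le_of_tendsto_dist_sub_dist (hBγ (x n)) (ht n)
    linarith [hxt n]
  exact tendsto_atBot_mono hbound <|
    tendsto_atBot_add_const_left _ _ (tendsto_neg_atBot_iff.mpr hx)

/-- If (x_n) lies in the geodesic region A(γ,R) and d(x_n,p) → ∞,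
then B_γ(x_n, p) → -∞. -/
theorem busemann_tendsto_atBot_in_geodesicRegion {X : Type*} [MetricSpace X]
    (γ : ℝ → X) (hγ : IsGeodesicRay γ) (p : X) (R : ℝ) (hR : 0 < R)
    (x : ℕ → X) (hx : Tendsto (fun n => dist (x n) p) atTop atTop)
    (t : ℕ → ℝ) (ht : ∀ n, 0 ≤ t n) (hxt : ∀ n, dist (x n) (γ (t n)) < R)
    (Bγ : X → ℝ)
    (hBγ : ∀ z : X, Tendsto (fun τ => dist z (γ τ) - dist (γ τ) p) atTop (nhds (Bγ z))) :
    Tendsto (fun n => Bγ (x n)) atTop atBot :=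
  busemann_tendsto_atBot_in_geodesicRegion_general γ hγ p R x hx t ht hxt Bγ hBγ
end

section
/- Let (X,d) be a proper metric space and f : X → X a non-expanding map. Let p ∈ X, A ∈ ℝ, and let (w_n) be a sequence in X such that: (1) for every x ∈ X, d(x,w_n) − d(w_n,p) converges to h_a(x); (2) for every x ∈ X, d(x,f(w_n)) − d(f(w_n),p) converges to h_b(x); (3) d(p,w_n) − d(p,f(w_n)) → A. Then h_b(f(z)) ≤ h_a(z) + A for every z ∈ X. -/
open Filter Metric Topology

lemma dist_map_sub_dist_map_le {X : Type*} [PseudoMetricSpace X] {f : X → X}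
    (hf : ∀ x y : X, dist (f x) (f y) ≤ dist x y) (p z w : X) :
    dist (f z) (f w) - dist (f w) p ≤ dist z w - dist w p + (dist p w - dist p (f w)) := by
  rw [dist_comm (f w) p, dist_comm w p]
  linarith [hf z w]

theorem weak_julia_general {X : Type*} [MetricSpace X]
    (f : X → X) (hf : ∀ x y : X, dist (f x) (f y) ≤ dist x y)
    (p : X) (A : ℝ) (w : ℕ → X) (ha hb : X → ℝ)
    (h1 : ∀ x : X, Tendsto (fun n => dist x (w n) - dist (w n) p) atTop (nhds (ha x)))
    (h2 : ∀ x : X, Tendsto (fun n => dist x (f (w n)) - dist (f (w n)) p) atTop (nhds (hb x)))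
    (h3 : Tendsto (fun n => dist p (w n) - dist p (f (w n))) atTop (nhds A)) :
    ∀ z : X, hb (f z) ≤ ha z + A := fun z =>
  le_of_tendsto_of_tendsto (h2 (f z)) ((h1 z).add h3)
    (Eventually.of_forall fun n => dist_map_sub_dist_map_le hf p z (w n))

/-- weak Julia lemma: if w_n → a, f(w_n) → b in the horofunction
sense and d(p,w_n) - d(p,f(w_n)) → A, then h_b ∘ f ≤ h_a + A. -/
theorem weak_julia {X : Type*} [MetricSpace X] [ProperSpace X]
    (f : X → X) (hf : ∀ x y : X, dist (f x) (f y) ≤ dist x y)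
    (p : X) (A : ℝ) (w : ℕ → X) (ha hb : X → ℝ)
    (h1 : ∀ x : X, Tendsto (fun n => dist x (w n) - dist (w n) p) atTop (nhds (ha x)))
    (h2 : ∀ x : X, Tendsto (fun n => dist x (f (w n)) - dist (f (w n)) p) atTop (nhds (hb x)))
    (h3 : Tendsto (fun n => dist p (w n) - dist p (f (w n))) atTop (nhds A)) :
    ∀ z : X, hb (f z) ≤ ha z + A :=
  weak_julia_general f hf p A w ha hb h1 h2 h3
end

section
/- Let (X,d) be a proper geodesic metric space which is δ-hyperbolic for some δ ≥ 0, and let f : X → X be a non-expanding map with d(z₀, f^n(z₀))/n → c, c > 0. Let (z_n)_{n≥0} be a backward orbit with bounded step, i.e. f(z_{n+1}) = z_n for all n and σ₁ := sup_n d(z_n, z_{n+1}) < ∞, with z₀ as above. Define the complete orbit (x_n)_{n∈ℤ} by x_n = z_{−n} for n ≤ 0 and x_n = f^n(z₀) for n ≥ 0. Then c·|n−m| ≤ d(x_n, x_m) ≤ σ₁·|n−m| for all n,m ∈ ℤ, so (x_n) is a discrete quasi-geodesic line, and there exist a geodesic line σ : ℝ → X and R > 0 such that every x_n lies within distance R of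 the image of σ. -/
open Filter Metric Topology

/-!
The upper bound holds because a non-expanding map does not increase the step
`d(x_t, x_{t+1})`. For the lower bound, the escape rate of a non-expanding map does not depend on
the base point, and by subadditivity of `n ↦ d(y, f^n y)` it bounds every displacement:
`d(y, f^n y) ≥ c n`.

For the geodesic line, a weighted version of the estimate
`(y_0|y_N)_w ≥ min_t (y_t|y_{t+1})_w - δ log₂ N` shows that a geodesic from `x_m` to `x_n` stays
uniformly close to the points `x_t`, `m ≤ t ≤ n`, and by connectedness every such `x_t` is then
close to the geodesic. Geodesic segments from `x_{-K}` to `x_K`, recentred near `x_0`, converge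
along an ultrafilter (`X` is proper) to a geodesic line that stays close to every `x_n`.
-/

section Real

lemma exists_sum_Ico_le_half_of_sum_Ico_le_one (μ : ℕ → ℝ) {a b : ℕ} (hab : a < b)
    (hsum : ∑ t ∈ Finset.Ico a b, μ t ≤ 1) :
    ∃ j, a ≤ j ∧ j < b ∧ ∑ t ∈ Finset.Ico a j, μ t ≤ 1 / 2 ∧
      ∑ t ∈ Finset.Ico (j + 1) b, μ t ≤ 1 / 2 := by
  classical
  set P : ℕ → Prop := fun i => a ≤ i ∧ ∑ t ∈ Finset.Ico a i, μ t ≤ 1 / 2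
  set j := Nat.findGreatest P (b - 1)
  have hj : P j := Nat.findGreatest_spec (m := a) (by omega) ⟨le_rfl, by simp⟩
  have hjb : j < b := (Nat.findGreatest_le _).trans_lt (by omega)
  refine ⟨j, hj.1, hjb, hj.2, ?_⟩
  rcases (Nat.succ_le_of_lt hjb).eq_or_lt with h | h
  · simp [← h]
  have hnot : ¬ P (j + 1) := Nat.findGreatest_is_greatest (Nat.lt_succ_self j) (by omega)
  have hhead : 1 / 2 < ∑ t ∈ Finset.Ico a (j + 1), μ t := by
    simpa [P, show a ≤ j + 1 by omega] using hnot
  linarith [Finset.sum_Ico_consecutive μ (show a ≤ j + 1 by omega) h.le]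

lemma sum_natAbs_sub_le_two_mul_tsum {g : ℕ → ℝ} (hg : ∀ k, 0 ≤ g k) (hs : Summable g)
    (s : Finset ℕ) (τ : ℕ) :
    ∑ t ∈ s, g ((t : ℤ) - τ).natAbs ≤ 2 * ∑' k, g k := by
  classical
  have hside : ∀ p : ℕ → Prop, [DecidablePred p] →
      Set.InjOn (fun t : ℕ => ((t : ℤ) - τ).natAbs) ↑(s.filter p) →
      ∑ t ∈ s.filter p, g ((t : ℤ) - τ).natAbs ≤ ∑' k, g k := by
    intro p _ hinj
    rw [← Finset.sum_image hinj]
    exact hs.sum_le_tsum _ fun k _ => hg k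
  rw [← Finset.sum_filter_add_sum_filter_not s (· ≤ τ), two_mul]
  gcongr
  · exact hside _ fun t ht t' ht' h => by simp at ht ht' h; omega
  · exact hside _ fun t ht t' ht' h => by simp at ht ht' h; omega

lemma hasSum_pow_sub {q : ℝ} (hq0 : 0 ≤ q) (hq1 : q < 1) (u : ℕ) :
    HasSum (fun k => q ^ (k - u)) (u + (1 - q)⁻¹) := by
  rw [← hasSum_nat_add_iff' u, Finset.sum_congr rfl fun k hk => by
    rw [Nat.sub_eq_zero_of_le (Finset.mem_range.1 hk).le]]
  simpa using hasSum_geometric_of_lt_one hq0 hq1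

lemma le_of_le_add_mul_log {r A C a b : ℝ} (hC : 0 < C) (ha : 0 < a) (hy : 0 < a * r + b)
    (h : r ≤ A + C * Real.log (a * r + b)) :
    r ≤ 2 * A + b / a + 2 * C * Real.log (2 * C * a) := by
  have hε : 0 < 2 * C * a := by positivity
  -- `log y ≤ ε y - 1 - log ε` with `ε = 1 / (2 C a)`
  have hlog : Real.log (a * r + b) ≤ (a * r + b) / (2 * C * a) - 1 + Real.log (2 * C * a) := by
    have := Real.log_le_sub_one_of_pos (div_pos hy hε)
    rw [Real.log_div hy.ne' hε.ne'] at this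
    linarith
  have hlin : C * ((a * r + b) / (2 * C * a)) = r / 2 + b / a / 2 := by
    field_simp
  linarith [mul_le_mul_of_nonneg_left hlog hC.le]

end Real

section Orbit

variable {X : Type*} {f : X → X} {x : ℤ → X}

lemma iterate_apply_eq_add (hx : ∀ t, f (x t) = x (t + 1)) (t : ℤ) (n : ℕ) :
    f^[n] (x t) = x (t + n) := by
  induction n with
  | zero => simp
  | succ n ih => rw [Function.iterate_succ_apply', ih, hx]; push_cast; ring_nf

variable [MetricSpace X]

lemma LipschitzWith.dist_iterate_mul_le (hf : LipschitzWith 1 f) (y : X) (n k : ℕ) :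
    dist y (f^[n * k] y) ≤ k * dist y (f^[n] y) := by
  induction k with
  | zero => simp
  | succ k ih =>
    calc dist y (f^[n * (k + 1)] y)
        ≤ dist y (f^[n * k] y) + dist (f^[n * k] y) (f^[n * k] (f^[n] y)) := by
          rw [← Function.iterate_add_apply, ← mul_add_one]
          exact dist_triangle _ _ _
      _ ≤ k * dist y (f^[n] y) + dist y (f^[n] y) := by
          gcongr
          simpa using (hf.iterate (n * k)).dist_le_mul y (f^[n] y)
      _ = (k + 1 : ℕ) * dist y (f^[n] y) := by push_cast; ring

lemma LipschitzWith.mul_le_dist_iterate (hf : LipschitzWith 1 f) {p : X} {c : ℝ}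
    (hrate : Tendsto (fun n : ℕ => dist p (f^[n] p) / n) atTop (𝓝 c)) (y : X) (n : ℕ) :
    c * n ≤ dist y (f^[n] y) := by
  rcases n.eq_zero_or_pos with rfl | hn
  · simp
  have hn' : (0 : ℝ) < n := by exact_mod_cast hn
  have hnk : Tendsto (fun k : ℕ => n * k) atTop atTop := tendsto_id.const_mul_atTop' hn
  have hbound : ∀ k : ℕ, 1 ≤ k → dist p (f^[n * k] p) / (n * k : ℕ)
      ≤ dist y (f^[n] y) / n + 2 * dist p y / (n * k : ℕ) := by
    intro k hk
    have hp : dist (f^[n * k] y) (f^[n * k] p) ≤ dist y p := by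
      simpa using (hf.iterate (n * k)).dist_le_mul y p
    have htri := dist_triangle4 p y (f^[n * k] y) (f^[n * k] p)
    have hsub := hf.dist_iterate_mul_le y n k
    calc dist p (f^[n * k] p) / (n * k : ℕ)
        ≤ (k * dist y (f^[n] y) + 2 * dist p y) / (n * k : ℕ) := by
          gcongr
          linarith [dist_comm p y]
      _ = dist y (f^[n] y) / n + 2 * dist p y / (n * k : ℕ) := by
          push_cast
          field_simp
  have hlim : Tendsto (fun k : ℕ => dist y (f^[n] y) / n + 2 * dist p y / (n * k : ℕ)) atTop
      (𝓝 (dist y (f^[n] y) / n)) := by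
    simpa using tendsto_const_nhds.add
      ((tendsto_natCast_atTop_atTop.comp hnk).const_div_atTop (2 * dist p y))
  have := le_of_tendsto_of_tendsto (hrate.comp hnk) hlim
    (eventually_atTop.2 ⟨1, hbound⟩)
  rwa [le_div_iff₀ hn'] at this

lemma dist_le_mul_abs_sub_of_dist_succ_le {L : ℝ}
    (hstep : ∀ t, dist (x t) (x (t + 1)) ≤ L) (a b : ℤ) :
    dist (x a) (x b) ≤ L * |(a : ℝ) - b| := by
  wlog hab : a ≤ b generalizing a b
  · simpa [dist_comm, abs_sub_comm] using this b a (le_of_not_ge hab)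
  obtain ⟨j, rfl⟩ : ∃ j : ℕ, b = a + j := ⟨(b - a).toNat, by omega⟩
  have := dist_le_range_sum_of_dist_le (f := fun i : ℕ => x (a + i)) j (d := fun _ => L)
    fun {k} _ => by simpa [add_assoc] using hstep (a + k)
  simpa [abs_of_nonneg, mul_comm] using this

lemma dist_succ_le_of_forall_neg (hf : LipschitzWith 1 f) (hx : ∀ t, f (x t) = x (t + 1))
    {L : ℝ} (hneg : ∀ t < 0, dist (x t) (x (t + 1)) ≤ L) (t : ℤ) :
    dist (x t) (x (t + 1)) ≤ L := by
  rcases lt_or_ge t 0 with ht | ht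
  · exact hneg t ht
  obtain ⟨n, rfl⟩ : ∃ n : ℕ, t = n := ⟨t.toNat, by omega⟩
  calc dist (x n) (x (n + 1)) = dist (f^[n + 1] (x (-1))) (f^[n + 1] (x 0)) := by
        rw [iterate_apply_eq_add hx, iterate_apply_eq_add hx]; push_cast; ring_nf
    _ ≤ dist (x (-1)) (x 0) := by simpa using (hf.iterate (n + 1)).dist_le_mul (x (-1)) (x 0)
    _ ≤ L := hneg (-1) (by norm_num)

lemma mul_abs_sub_le_dist_of_tendsto (hf : LipschitzWith 1 f) (hx : ∀ t, f (x t) = x (t + 1))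
    {p : X} {c : ℝ} (hrate : Tendsto (fun n : ℕ => dist p (f^[n] p) / n) atTop (𝓝 c))
    (a b : ℤ) : c * |(a : ℝ) - b| ≤ dist (x a) (x b) := by
  wlog hab : a ≤ b generalizing a b
  · simpa [dist_comm, abs_sub_comm] using this b a (le_of_not_ge hab)
  obtain ⟨n, rfl⟩ : ∃ n : ℕ, b = a + n := ⟨(b - a).toNat, by omega⟩
  rw [← iterate_apply_eq_add hx]
  simpa [abs_of_nonneg] using hf.mul_le_dist_iterate hrate (x a) n

end Orbit

section Hyperbolic

variable {X : Type*} [MetricSpace X]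

lemma gromovProduct_le_dist_left (p a b : X) : gromovProduct p a b ≤ dist a p := by
  unfold gromovProduct
  linarith [dist_triangle b a p, dist_comm b a]

lemma gromovProduct_le_dist_right (p a b : X) : gromovProduct p a b ≤ dist b p := by
  unfold gromovProduct
  linarith [dist_triangle a b p]

@[simp]
lemma gromovProduct_self (p a : X) : gromovProduct p a a = dist a p := by
  simp [gromovProduct]

lemma IsDeltaHyperbolic.mono {δ δ' : ℝ} (h : IsDeltaHyperbolic X δ) (hδ : δ ≤ δ') :
    IsDeltaHyperbolic X δ' :=
  fun p x y z => by linarith [h p x y z]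

/-- Weighted form of the estimate `(y₀|y_N)_w ≥ min_t (y_t|y_{t+1})_w - δ log₂ N`: a link of
weight `μ t` may have a Gromov product smaller by `2δ log₂ (1/μ t)`. -/
theorem IsDeltaHyperbolic.le_gromovProduct_of_chain {δ : ℝ} (hhyp : IsDeltaHyperbolic X δ)
    (hδ : 0 ≤ δ) (w : X) (y : ℕ → X) (a b : ℕ) (μ : ℕ → ℝ) (B : ℝ) (hab : a < b)
    (hpos : ∀ t ∈ Finset.Ico a b, 0 < μ t)
    (hsum : ∑ t ∈ Finset.Ico a b, μ t ≤ 1)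
    (hB : ∀ t ∈ Finset.Ico a b,
      B ≤ gromovProduct w (y t) (y (t + 1)) + 2 * δ * Real.logb 2 (μ t)) :
    B - 2 * δ ≤ gromovProduct w (y a) (y b) := by
  induction hn : b - a using Nat.strong_induction_on generalizing a b μ B with
  | _ n ih =>
  have hlink : ∀ t ∈ Finset.Ico a b, B ≤ gromovProduct w (y t) (y (t + 1)) := fun t ht => by
    have hμ : μ t ≤ 1 := (Finset.single_le_sum (fun i hi => (hpos i hi).le) ht).trans hsum
    have := mul_nonpos_of_nonneg_of_nonpos (mul_nonneg zero_le_two hδ)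
      (Real.logb_nonpos one_lt_two (hpos t ht).le hμ)
    linarith [hB t ht]
  -- a piece of weight at most `1/2` satisfies the hypotheses for the doubled weights `2 μ`
  have hpiece : ∀ a' b', a ≤ a' → a' < b' → b' ≤ b → b' - a' < n →
      ∑ t ∈ Finset.Ico a' b', μ t ≤ 1 / 2 → B ≤ gromovProduct w (y a') (y b') := by
    intro a' b' ha' hab' hb' hlt hhalf
    have hsub : Finset.Ico a' b' ⊆ Finset.Ico a b := Finset.Ico_subset_Ico ha' hb'
    have := ih _ hlt a' b' (fun t => 2 * μ t) (B + 2 * δ) hab'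
      (fun t ht => by have := hpos t (hsub ht); positivity)
      (by rw [← Finset.mul_sum]; linarith)
      (fun t ht => by
        rw [Real.logb_mul two_ne_zero (hpos t (hsub ht)).ne', Real.logb_self_eq_one one_lt_two]
        linarith [hB t (hsub ht)]) rfl
    linarith
  obtain ⟨j, haj, hjb, hleft, hright⟩ := exists_sum_Ico_le_half_of_sum_Ico_le_one μ hab hsum
  have hL : B ≤ gromovProduct w (y a) (y j) := by
    rcases haj.eq_or_lt with rfl | h
    · simpa using (hlink a (by simp [hab])).trans (gromovProduct_le_dist_left _ _ _)
    · exact hpiece a j le_rfl h hjb.le (by omega) hleft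
  have hR : B ≤ gromovProduct w (y (j + 1)) (y b) := by
    rcases (Nat.succ_le_of_lt hjb).eq_or_lt with h | h
    · rw [← h, gromovProduct_self]
      exact (hlink j (by simp [haj, hjb])).trans (gromovProduct_le_dist_right _ _ _)
    · exact hpiece (j + 1) b (by omega) h le_rfl (by omega) hright
  have hM : B ≤ gromovProduct w (y j) (y (j + 1)) := hlink j (by simp [haj, hjb])
  have h1 := hhyp w (y a) (y (j + 1)) (y j)
  have h2 := hhyp w (y a) (y b) (y (j + 1))
  have h3 : B - δ ≤ gromovProduct w (y a) (y (j + 1)) := by linarith [le_min hL hM]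
  have h4 : B - δ ≤ gromovProduct w (y (j + 1)) (y b) := by linarith
  linarith [le_min h3 h4]

lemma le_gromovProduct_of_le_dist {w a b p : X} {c L : ℝ} {k u : ℕ}
    (ha : dist p w ≤ dist a w) (hb : dist p w ≤ dist b w) (hab : dist a b ≤ L) (hL : 0 ≤ L)
    (hap : c * k ≤ dist a p) (hu : 2 * dist p w ≤ c * u) :
    dist p w - L + c * (k - u : ℕ) ≤ gromovProduct w a b := by
  have h₁ : (dist a w + dist b w - L) / 2 ≤ gromovProduct w a b := by
    unfold gromovProduct
    linarith
  have h₂ := dist_triangle a b w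
  rcases le_or_gt k u with h | h
  · rw [Nat.sub_eq_zero_of_le h]
    push_cast
    linarith
  · rw [Nat.cast_sub h.le]
    linarith [dist_triangle a w p, dist_comm w p]

theorem IsDeltaHyperbolic.dist_le_logb_of_chain {δ c L q : ℝ}
    (hhyp : IsDeltaHyperbolic X δ) (hδ : 0 ≤ δ) (hc : 0 < c) (hq0 : 0 < q) (hq1 : q < 1)
    (hq : 2 * δ * Real.logb 2 q = -c) {y : ℕ → X} {N τ : ℕ} (hN : 0 < N) (hτ : τ ≤ N)
    {w : X} (hw : gromovProduct w (y 0) (y N) = 0) (hmin : ∀ t ≤ N, dist (y τ) w ≤ dist (y t) w)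
    (hstep : ∀ t < N, dist (y t) (y (t + 1)) ≤ L)
    (hlow : ∀ t < N, c * ((t : ℤ) - τ).natAbs ≤ dist (y t) (y τ)) :
    dist (y τ) w ≤
      L + 2 * δ + 2 * δ * Real.logb 2 (2 * (2 * dist (y τ) w / c + 2 + (1 - q)⁻¹)) := by
  set r := dist (y τ) w
  have hL : 0 ≤ L := dist_nonneg.trans (hstep 0 hN)
  -- the weights `q ^ (|t - τ| - u)` equal one near `τ` and decay geometrically beyond
  -- `u ≈ 2r/c`, so their total `K` is `O(r)`
  set u : ℕ := ⌈2 * r / c⌉₊ + 1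
  set e : ℕ → ℕ := fun t => ((t : ℤ) - τ).natAbs - u
  set K := ∑ t ∈ Finset.Ico 0 N, q ^ e t
  have hK_one : 1 ≤ K := by
    have hmem : min τ (N - 1) ∈ Finset.Ico 0 N := by simp; omega
    have he : e (min τ (N - 1)) = 0 := by simp only [e, u]; omega
    have := Finset.single_le_sum (fun t _ => (pow_pos hq0 (e t)).le) hmem
    rwa [he, pow_zero] at this
  have hK_pos : 0 < K := one_pos.trans_le hK_one
  have hK_le : K ≤ 2 * (2 * r / c + 2 + (1 - q)⁻¹) := by
    have hsum := hasSum_pow_sub hq0.le hq1 u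
    have hu : (u : ℝ) ≤ 2 * r / c + 2 := by
      have := Nat.ceil_lt_add_one (show 0 ≤ 2 * r / c by positivity)
      simp only [u]; push_cast; linarith
    calc K ≤ 2 * ∑' k, q ^ (k - u) :=
          sum_natAbs_sub_le_two_mul_tsum (fun k => by positivity) hsum.summable _ τ
      _ ≤ 2 * (2 * r / c + 2 + (1 - q)⁻¹) := by rw [hsum.tsum_eq]; linarith
  have hcu : 2 * r ≤ c * u := by
    have := Nat.le_ceil (2 * r / c)
    rw [div_le_iff₀ hc] at this
    simp only [u]; push_cast; linarith
  have hgp : ∀ t < N, r - L + c * e t ≤ gromovProduct w (y t) (y (t + 1)) := fun t ht =>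
    le_gromovProduct_of_le_dist (hmin t ht.le) (hmin (t + 1) ht) (hstep t ht) hL (hlow t ht) hcu
  have hchain := hhyp.le_gromovProduct_of_chain hδ w y 0 N (fun t => q ^ e t / K)
    (r - L - 2 * δ * Real.logb 2 K) hN (fun t _ => by positivity)
    (by rw [← Finset.sum_div, div_self hK_pos.ne'])
    (fun t ht => by
      rw [Real.logb_div (pow_pos hq0 _).ne' hK_pos.ne', Real.logb_pow, mul_sub,
        mul_left_comm, hq]
      linarith [hgp t (Finset.mem_Ico.1 ht).2])
  rw [hw] at hchain
  have := mul_le_mul_of_nonneg_left (Real.logb_le_logb_of_le one_lt_two hK_pos hK_le)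
    (by positivity : 0 ≤ 2 * δ)
  linarith

theorem IsDeltaHyperbolic.exists_dist_le_of_gromovProduct_eq_zero {δ c L : ℝ}
    (hhyp : IsDeltaHyperbolic X δ) (hδ : 0 < δ) (hc : 0 < c) {x : ℤ → X}
    (hlow : ∀ a b : ℤ, c * |(a : ℝ) - b| ≤ dist (x a) (x b))
    (hup : ∀ a b : ℤ, dist (x a) (x b) ≤ L * |(a : ℝ) - b|) :
    ∃ R, ∀ m n : ℤ, m ≤ n → ∀ w : X, gromovProduct w (x m) (x n) = 0 →
      ∃ t, m ≤ t ∧ t ≤ n ∧ dist (x t) w ≤ R := by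
  set q : ℝ := 2 ^ (-(c / (2 * δ)))
  have hq0 : 0 < q := by positivity
  have hq1 : q < 1 :=
    Real.rpow_lt_one_of_one_lt_of_neg one_lt_two (neg_neg_of_pos (by positivity))
  have hq : 2 * δ * Real.logb 2 q = -c := by
    rw [Real.logb_rpow two_pos (by norm_num)]
    field_simp
  set C := 2 * δ / Real.log 2
  set b := 2 * (2 + (1 - q)⁻¹)
  refine ⟨max 0 (2 * (L + 2 * δ) + b / (4 / c) + 2 * C * Real.log (2 * C * (4 / c))),
    fun m n hmn w hw => ?_⟩
  obtain ⟨N, rfl⟩ : ∃ N : ℕ, n = m + N := ⟨(n - m).toNat, by omega⟩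
  obtain ⟨τ, hτ, hmin⟩ :=
    (Finset.range (N + 1)).exists_min_image (fun t => dist (x (m + t)) w) ⟨0, by simp⟩
  rw [Finset.mem_range] at hτ
  refine ⟨m + τ, by omega, by omega, ?_⟩
  rcases N.eq_zero_or_pos with rfl | hN
  · obtain rfl : τ = 0 := by omega
    simp_all
  have hchain := hhyp.dist_le_logb_of_chain hδ.le hc hq0 hq1 hq (y := fun t => x (m + t)) hN
    (by omega) (by simpa using hw) (fun t ht => hmin t (by simp; omega))
    (fun t _ => by simpa [add_assoc] using hup (m + t) (m + t + 1))
    (fun t _ => by simpa [Nat.cast_natAbs] using hlow (m + t) (m + τ))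
  set r := dist (x (m + τ)) w
  rw [Real.logb, show 2 * (2 * r / c + 2 + (1 - q)⁻¹) = 4 / c * r + b by ring] at hchain
  refine le_max_of_le_right (le_of_le_add_mul_log (by positivity) (by positivity) (by positivity)
    (hchain.trans_eq ?_))
  ring

lemma IsGeodesicSpace.exists_lipschitz_segment (hX : IsGeodesicSpace X) (p p' : X) :
    ∃ γ : ℝ → X, LipschitzWith 1 γ ∧ γ 0 = p ∧ γ (dist p p') = p' ∧
      ∀ s ∈ Set.Icc 0 (dist p p'), ∀ t ∈ Set.Icc 0 (dist p p'),
        dist (γ s) (γ t) = |s - t| := by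
  obtain ⟨γ, h0, h1, hiso⟩ := hX p p'
  have hD : 0 ≤ dist p p' := dist_nonneg
  refine ⟨fun s => γ (Set.projIcc 0 (dist p p') hD s), .of_dist_le_mul fun s t => ?_, ?_, ?_,
    ?_⟩
  · rw [hiso _ (Subtype.mem _) _ (Subtype.mem _)]
    simpa [Subtype.dist_eq, Real.dist_eq] using (LipschitzWith.projIcc hD).dist_le_mul s t
  · simp [h0]
  · simp [h1]
  · intro s hs t ht
    simp [Set.projIcc_of_mem hD hs, Set.projIcc_of_mem hD ht, hiso s hs t ht]

lemma dist_apply_of_isometry {γ : ℝ → X} {D s : ℝ}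
    (hiso : ∀ s ∈ Set.Icc 0 D, ∀ t ∈ Set.Icc 0 D, dist (γ s) (γ t) = |s - t|)
    (hs : s ∈ Set.Icc 0 D) : dist (γ 0) (γ s) = s ∧ dist (γ s) (γ D) = D - s := by
  have hD : 0 ≤ D := hs.1.trans hs.2
  rw [hiso 0 ⟨le_rfl, hD⟩ s hs, hiso s hs D ⟨hD, le_rfl⟩, abs_of_nonpos (by linarith [hs.1]),
    abs_of_nonpos (by linarith [hs.2])]
  constructor <;> ring

lemma gromovProduct_apply_eq_zero_of_isometry {γ : ℝ → X} {D s : ℝ}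
    (hiso : ∀ s ∈ Set.Icc 0 D, ∀ t ∈ Set.Icc 0 D, dist (γ s) (γ t) = |s - t|)
    (hs : s ∈ Set.Icc 0 D) : gromovProduct (γ s) (γ 0) (γ D) = 0 := by
  have hD : 0 ≤ D := hs.1.trans hs.2
  obtain ⟨h₁, h₂⟩ := dist_apply_of_isometry hiso hs
  obtain ⟨h₃, -⟩ := dist_apply_of_isometry hiso (s := D) ⟨hD, le_rfl⟩
  rw [gromovProduct, h₁, dist_comm (γ D), h₂, h₃]
  ring

theorem exists_dist_le_of_forall_exists_dist_le {c L R D : ℝ} (hc : 0 < c) {x : ℤ → X}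
    (hlow : ∀ a b : ℤ, c * |(a : ℝ) - b| ≤ dist (x a) (x b))
    (hup : ∀ a b : ℤ, dist (x a) (x b) ≤ L * |(a : ℝ) - b|) {m k n : ℤ} (hmk : m ≤ k)
    (hkn : k ≤ n) {γ : ℝ → X} (hγ : Continuous γ) (hD : 0 ≤ D) (hγ0 : γ 0 = x m)
    (hγD : γ D = x n)
    (hnear : ∀ s ∈ Set.Icc 0 D, ∃ t, m ≤ t ∧ t ≤ n ∧ dist (x t) (γ s) ≤ R) :
    ∃ s ∈ Set.Icc 0 D, dist (x k) (γ s) ≤ L * (2 * R / c) + R := by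
  have hL : 0 ≤ L := by simpa using dist_nonneg.trans (hup 0 1)
  have hR : 0 ≤ R := by
    obtain ⟨t, -, -, ht⟩ := hnear 0 ⟨le_rfl, hD⟩
    exact dist_nonneg.trans ht
  -- `γ` is covered by the closed sets of times close to some `x t` with `t ≤ k`, resp. `t ≥ k`
  set S := ⋃ t ∈ Finset.Icc m k, γ ⁻¹' closedBall (x t) R
  set T := ⋃ t ∈ Finset.Icc k n, γ ⁻¹' closedBall (x t) R
  have hclosed : ∀ I : Finset ℤ, IsClosed (⋃ t ∈ I, γ ⁻¹' closedBall (x t) R) := fun I =>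
    I.finite_toSet.isClosed_biUnion fun t _ => isClosed_closedBall.preimage hγ
  have hcover : Set.Icc 0 D ⊆ S ∪ T := by
    intro s hs
    obtain ⟨t, hmt, htn, ht⟩ := hnear s hs
    have ht' : γ s ∈ closedBall (x t) R := by simpa [dist_comm] using ht
    rcases le_total t k with htk | htk
    · exact Or.inl (Set.mem_biUnion (Finset.mem_Icc.2 ⟨hmt, htk⟩) ht')
    · exact Or.inr (Set.mem_biUnion (Finset.mem_Icc.2 ⟨htk, htn⟩) ht')
  have hS : (Set.Icc 0 D ∩ S).Nonempty :=
    ⟨0, ⟨le_rfl, hD⟩, Set.mem_biUnion (Finset.mem_Icc.2 ⟨le_rfl, hmk⟩) (by simp [hγ0, hR])⟩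
  have hT : (Set.Icc 0 D ∩ T).Nonempty :=
    ⟨D, ⟨hD, le_rfl⟩, Set.mem_biUnion (Finset.mem_Icc.2 ⟨hkn, le_rfl⟩) (by simp [hγD, hR])⟩
  obtain ⟨s, hs, hsS, hsT⟩ :=
    isPreconnected_closed_iff.1 isPreconnected_Icc S T (hclosed _) (hclosed _) hcover hS hT
  simp only [S, T, Set.mem_iUnion, Set.mem_preimage, mem_closedBall, Finset.mem_Icc] at hsS hsT
  obtain ⟨t, ⟨-, htk⟩, ht⟩ := hsS
  obtain ⟨t', ⟨hkt', -⟩, ht'⟩ := hsT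
  have hgap : c * ((t' : ℝ) - t) ≤ 2 * R := by
    have := hlow t' t
    rw [abs_of_nonneg (by simp; omega)] at this
    linarith [dist_triangle (x t') (γ s) (x t), dist_comm (x t') (γ s)]
  have hk : (k : ℝ) ≤ t' := by exact_mod_cast hkt'
  have htk' : (t : ℝ) ≤ k := by exact_mod_cast htk
  refine ⟨s, hs, ?_⟩
  calc dist (x k) (γ s) ≤ L * ((t' : ℝ) - k) + R := by
        have := hup k t'
        rw [abs_of_nonpos (by linarith), neg_sub] at this
        linarith [dist_triangle (x k) (x t') (γ s), dist_comm (γ s) (x t')]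
    _ ≤ L * (2 * R / c) + R := by
        gcongr
        rw [le_div_iff₀ hc]
        nlinarith

theorem IsDeltaHyperbolic.exists_dist_segment_le {δ c L : ℝ} (hhyp : IsDeltaHyperbolic X δ)
    (hδ : 0 < δ) (hc : 0 < c) {x : ℤ → X}
    (hlow : ∀ a b : ℤ, c * |(a : ℝ) - b| ≤ dist (x a) (x b))
    (hup : ∀ a b : ℤ, dist (x a) (x b) ≤ L * |(a : ℝ) - b|) :
    ∃ R, ∀ m k n : ℤ, m ≤ k → k ≤ n → ∀ γ : ℝ → X, Continuous γ → γ 0 = x m →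
      γ (dist (x m) (x n)) = x n →
      (∀ s ∈ Set.Icc 0 (dist (x m) (x n)), ∀ t ∈ Set.Icc 0 (dist (x m) (x n)),
        dist (γ s) (γ t) = |s - t|) →
      ∃ s ∈ Set.Icc 0 (dist (x m) (x n)), dist (x k) (γ s) ≤ R := by
  obtain ⟨R₀, hR₀⟩ := hhyp.exists_dist_le_of_gromovProduct_eq_zero hδ hc hlow hup
  refine ⟨L * (2 * R₀ / c) + R₀, fun m k n hmk hkn γ hγ hγ0 hγD hiso => ?_⟩
  refine exists_dist_le_of_forall_exists_dist_le hc hlow hup hmk hkn hγ dist_nonneg hγ0 hγD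
    fun s hs => hR₀ m n (hmk.trans hkn) _ ?_
  rw [← hγ0, ← hγD]
  exact gromovProduct_apply_eq_zero_of_isometry hiso hs

theorem exists_isometry_of_eventually_isometry {ι : Type*} [ProperSpace X] {l : Filter ι}
    [l.NeBot] (γ : ι → ℝ → X) (hlip : ∀ i, LipschitzWith 1 (γ i)) {p : X} {R : ℝ}
    (h0 : ∀ i, dist (γ i 0) p ≤ R)
    (hiso : ∀ s t, ∀ᶠ i in l, dist (γ i s) (γ i t) = |s - t|) :
    ∃ σ : ℝ → X, (∀ s t, dist (σ s) (σ t) = |s - t|) ∧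
      ∀ y R' M, (∀ᶠ i in l, ∃ t, |t| ≤ M ∧ dist y (γ i t) ≤ R') →
        ∃ t, dist y (σ t) ≤ R' := by
  obtain ⟨U, hU⟩ := exists_ultrafilter_le l
  have hlim : ∀ s, ∃ a, Tendsto (fun i => γ i s) U (𝓝 a) := by
    intro s
    have hball : ∀ i, γ i s ∈ closedBall p (|s| + R) := fun i => by
      have := (hlip i).dist_le_mul s 0
      simp only [NNReal.coe_one, one_mul, Real.dist_eq, sub_zero] at this
      exact (dist_triangle _ _ _).trans (add_le_add this (h0 i))
    obtain ⟨a, -, ha⟩ := (isCompact_closedBall p (|s| + R)).ultrafilter_le_nhds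
      (U.map fun i => γ i s) (by
        rw [Ultrafilter.coe_map, le_principal_iff]; exact mem_map.2 (univ_mem' hball))
    exact ⟨a, by rwa [Ultrafilter.coe_map] at ha⟩
  choose σ hσ using hlim
  refine ⟨σ, fun s t => ?_, fun y R' M hy => ?_⟩
  · exact tendsto_nhds_unique ((hσ s).dist (hσ t))
      (tendsto_const_nhds.congr' (((hiso s t).filter_mono hU).mono fun i h => h.symm))
  obtain ⟨τ, hτ⟩ := hy.choice
  have hτU := hτ.filter_mono hU
  obtain ⟨t, -, ht⟩ := (isCompact_closedBall (0 : ℝ) M).ultrafilter_le_nhds (U.map τ) (by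
    rw [Ultrafilter.coe_map, le_principal_iff]
    exact mem_map.2 (hτU.mono fun i hi => by simpa using hi.1))
  replace ht : Tendsto τ U (𝓝 t) := by rwa [Ultrafilter.coe_map] at ht
  refine ⟨t, le_of_tendsto_of_tendsto (tendsto_const_nhds.dist (hσ t))
    (by simpa using tendsto_const_nhds.add ((ht.sub_const t).abs)) (hτU.mono fun i hi => ?_)⟩
  have := (hlip i).dist_le_mul (τ i) t
  simp only [NNReal.coe_one, one_mul, Real.dist_eq] at this
  exact (dist_triangle _ _ _).trans (add_le_add hi.2 this)

theorem IsDeltaHyperbolic.exists_isometry_near_of_bilipschitz [ProperSpace X]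
    (hX : IsGeodesicSpace X) {δ c L : ℝ} (hhyp : IsDeltaHyperbolic X δ) (hδ : 0 < δ)
    (hc : 0 < c) {x : ℤ → X} (hlow : ∀ a b : ℤ, c * |(a : ℝ) - b| ≤ dist (x a) (x b))
    (hup : ∀ a b : ℤ, dist (x a) (x b) ≤ L * |(a : ℝ) - b|) :
    ∃ σ : ℝ → X, (∀ s t, dist (σ s) (σ t) = |s - t|) ∧
      ∃ R, ∀ n : ℤ, ∃ t, dist (x n) (σ t) ≤ R := by
  obtain ⟨R, hR⟩ := hhyp.exists_dist_segment_le hδ hc hlow hup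
  choose γ hlip hγ0 hγD hiso using fun K : ℕ => hX.exists_lipschitz_segment (x (-K)) (x K)
  set D : ℕ → ℝ := fun K => dist (x (-K)) (x K)
  have hclose : ∀ (K : ℕ) (k : ℤ), -K ≤ k → k ≤ K →
      ∃ s ∈ Set.Icc 0 (D K), dist (x k) (γ K s) ≤ R := fun K k h₁ h₂ =>
    hR _ k _ h₁ h₂ (γ K) (hlip K).continuous (hγ0 K) (hγD K) (hiso K)
  choose s₀ hs₀ hs₀R using fun K : ℕ => hclose K 0 (by omega) (by omega)
  -- both endpoints are at distance `≥ c K` from `x 0`, which is `R`-close to `γ K (s₀ K)`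
  have hgrow : ∀ K : ℕ, c * K - R ≤ s₀ K ∧ c * K - R ≤ D K - s₀ K := by
    intro K
    obtain ⟨h₁, h₂⟩ := dist_apply_of_isometry (hiso K) (hs₀ K)
    rw [hγ0] at h₁
    rw [hγD] at h₂
    have h₃ := hlow (-K) 0
    have h₄ := hlow 0 K
    simp only [Int.cast_neg, Int.cast_natCast, Int.cast_zero, sub_zero, zero_sub, abs_neg,
      Nat.abs_cast] at h₃ h₄
    have h₅ := dist_triangle (x (-K)) (γ K (s₀ K)) (x 0)
    have h₆ := dist_triangle (x 0) (γ K (s₀ K)) (x K)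
    have h₇ := hs₀R K
    rw [dist_comm (γ K (s₀ K)) (x 0)] at h₅
    constructor <;> linarith
  obtain ⟨σ, hσ, hnear⟩ := exists_isometry_of_eventually_isometry (l := atTop)
    (fun K s => γ K (s + s₀ K)) (fun K => by
      simpa [Function.comp_def] using (hlip K).comp (isometry_add_right (s₀ K)).lipschitz)
    (p := x 0) (R := R) (fun K => by simpa [dist_comm] using hs₀R K) (fun s t => by
      filter_upwards [(tendsto_natCast_atTop_atTop.const_mul_atTop hc).eventually_ge_atTop
        (|s| + |t| + R)] with K hK
      have := hgrow K
      rw [hiso K _ ⟨?_, ?_⟩ _ ⟨?_, ?_⟩, add_sub_add_right_eq_sub] <;>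
        linarith [neg_abs_le s, le_abs_self s, neg_abs_le t, le_abs_self t, abs_nonneg s,
          abs_nonneg t])
  refine ⟨σ, hσ, R, fun n => hnear (x n) R (L * |(n : ℝ)| + 2 * R) ?_⟩
  filter_upwards [eventually_ge_atTop n.natAbs] with K hK
  obtain ⟨s, hs, hsR⟩ := hclose K n (by omega) (by omega)
  refine ⟨s - s₀ K, ?_, by simpa using hsR⟩
  rw [← hiso K s hs (s₀ K) (hs₀ K)]
  have := hup n 0
  simp only [Int.cast_zero, sub_zero] at this
  linarith [dist_triangle4 (γ K s) (x n) (x 0) (γ K (s₀ K)), dist_comm (γ K s) (x n), hs₀R K]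

end Hyperbolic

theorem backward_orbit_quasigeodesic_line_general {X : Type*} [MetricSpace X] [ProperSpace X]
    (hX : IsGeodesicSpace X)
    (δ : ℝ) (hhyp : IsDeltaHyperbolic X δ)
    (f : X → X) (hf : ∀ a b : X, dist (f a) (f b) ≤ dist a b)
    (c : ℝ) (hc : 0 < c)
    (z : ℕ → X) (hback : ∀ n : ℕ, f (z (n + 1)) = z n)
    (s1 : ℝ) (hs1 : ∀ n : ℕ, dist (z n) (z (n + 1)) ≤ s1)
    (hrate : Tendsto (fun n : ℕ => dist (z 0) (f^[n] (z 0)) / n) atTop (nhds c))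
    (x : ℤ → X)
    (hxneg : ∀ n : ℕ, x (-(n : ℤ)) = z n)
    (hxpos : ∀ n : ℕ, x (n : ℤ) = f^[n] (z 0)) :
    (∀ n m : ℤ, c * |(n : ℝ) - (m : ℝ)| ≤ dist (x n) (x m) ∧
      dist (x n) (x m) ≤ s1 * |(n : ℝ) - (m : ℝ)|) ∧
    (∃ σ : ℝ → X, (∀ s t : ℝ, dist (σ s) (σ t) = |s - t|) ∧
      ∃ R > (0 : ℝ), ∀ n : ℤ, ∃ t : ℝ, dist (x n) (σ t) ≤ R) := by
  have hlip : LipschitzWith 1 f := .of_dist_le_mul fun a b => by simpa using hf a b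
  have hneg_succ (n : ℕ) : -((n + 1 : ℕ) : ℤ) + 1 = -(n : ℤ) := by push_cast; ring
  have hx : ∀ t, f (x t) = x (t + 1) := by
    intro t
    rcases le_or_gt 0 t with ht | ht
    · obtain ⟨n, rfl⟩ : ∃ n : ℕ, t = n := ⟨t.toNat, by omega⟩
      rw [hxpos, ← Function.iterate_succ_apply' f n, ← hxpos]
      push_cast
      rfl
    · obtain ⟨n, rfl⟩ : ∃ n : ℕ, t = -((n + 1 : ℕ) : ℤ) := ⟨(-t - 1).toNat, by omega⟩
      rw [hxneg, hneg_succ, hxneg, hback]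
  have hstep := dist_succ_le_of_forall_neg hlip hx fun t ht => by
    obtain ⟨n, rfl⟩ : ∃ n : ℕ, t = -((n + 1 : ℕ) : ℤ) := ⟨(-t - 1).toNat, by omega⟩
    rw [hneg_succ, hxneg, hxneg, dist_comm]
    exact hs1 n
  have hup := dist_le_mul_abs_sub_of_dist_succ_le hstep
  have hlow := mul_abs_sub_le_dist_of_tendsto hlip hx hrate
  refine ⟨fun n m => ⟨hlow n m, hup n m⟩, ?_⟩
  -- the shadowing argument uses weights `2 ^ (-c / 2δ)`, so `δ` is first made positive
  obtain ⟨σ, hσ, R, hR⟩ :=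
    (hhyp.mono (le_max_left δ 1)).exists_isometry_near_of_bilipschitz hX (by positivity) hc hlow hup
  exact ⟨σ, hσ, max R 1, by positivity,
    fun n => (hR n).imp fun t ht => ht.trans (le_max_left _ _)⟩

/-- if c(f) > 0 and (z_n) is a backward orbit with bounded step,
then the induced complete orbit is a discrete quasi-geodesic line lying within
bounded distance of a geodesic line. -/
theorem backward_orbit_quasigeodesic_line {X : Type*} [MetricSpace X] [ProperSpace X]
    (hX : IsGeodesicSpace X)
    (δ : ℝ) (hδ : 0 ≤ δ) (hhyp : IsDeltaHyperbolic X δ)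
    (f : X → X) (hf : ∀ a b : X, dist (f a) (f b) ≤ dist a b)
    (c : ℝ) (hc : 0 < c)
    (z : ℕ → X) (hback : ∀ n : ℕ, f (z (n + 1)) = z n)
    (s1 : ℝ) (hs1 : ∀ n : ℕ, dist (z n) (z (n + 1)) ≤ s1)
    (hrate : Tendsto (fun n : ℕ => dist (z 0) (f^[n] (z 0)) / n) atTop (nhds c))
    (x : ℤ → X)
    (hxneg : ∀ n : ℕ, x (-(n : ℤ)) = z n)
    (hxpos : ∀ n : ℕ, x (n : ℤ) = f^[n] (z 0)) :
    (∀ n m : ℤ, c * |(n : ℝ) - (m : ℝ)| ≤ dist (x n) (x m) ∧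
      dist (x n) (x m) ≤ s1 * |(n : ℝ) - (m : ℝ)|) ∧
    (∃ σ : ℝ → X, (∀ s t : ℝ, dist (σ s) (σ t) = |s - t|) ∧
      ∃ R > (0 : ℝ), ∀ n : ℤ, ∃ t : ℝ, dist (x n) (σ t) ≤ R) :=
  backward_orbit_quasigeodesic_line_general hX δ hhyp f hf c hc z hback s1 hs1 hrate x hxneg hxpos
end

section
/- Let (X,d) be a metric space, f : X → X a non-expanding map, and z₀ ∈ X such that d(z₀, f^n(z₀)) → ∞ and d(z₀, f^n(z₀))/n → c. Then liminf_{n→∞} ( d(z₀, f^n(z₀)) − d(z₀, f^{n+1}(z₀)) ) ≤ −c; in particular there is a strictly increasing sequence (n_k) such that, setting w_k := f^{n_k}(z₀), one has d(z₀,w_k) → ∞ and limsup_{k→∞} ( d(z₀, w_k) − d(z₀, f(w_k)) ) ≤ −c. (Hence the dilation of f at its Denjoy–Wolff point satisfies log λ ≤ −c(f).) -/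
open Filter Metric Topology

/-!
If `d(z₀, fⁿ z₀) - d(z₀, fⁿ⁺¹ z₀)` stayed eventually above some `b > -c`, the orbit would
move away from `z₀` at rate at most `-b < c`, contradicting `d(z₀, fⁿ z₀)/n → c`. These
differences are bounded by `d(z₀, f z₀)` because `f` is non-expanding, so their `liminf` is
the limit of a subsequence, which provides the `n_k`.
-/

theorem LipschitzWith.abs_dist_iterate_sub_dist_iterate_succ_le {α : Type*}
    [PseudoMetricSpace α] {f : α → α} (hf : LipschitzWith 1 f) (p x : α) (n : ℕ) :
    |dist p (f^[n] x) - dist p (f^[n + 1] x)| ≤ dist x (f x) :=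
  calc |dist p (f^[n] x) - dist p (f^[n + 1] x)| ≤ dist (f^[n] x) (f^[n + 1] x) := by
        simpa only [dist_comm p] using abs_dist_sub_le (f^[n] x) (f^[n + 1] x) p
    _ ≤ dist x (f x) := by simpa using hf.dist_iterate_succ_le_geometric x n

theorem le_of_tendsto_div_of_eventually_succ_sub_le {a : ℕ → ℝ} {c β : ℝ}
    (hrate : Tendsto (fun n : ℕ => a n / n) atTop (𝓝 c))
    (h : ∀ᶠ n in atTop, a (n + 1) - a n ≤ β) : c ≤ β := by
  obtain ⟨N, hN⟩ := eventually_atTop.1 h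
  have hbound : ∀ m : ℕ, a (N + m) ≤ a N + m * β := by
    intro m
    induction m with
    | zero => simp
    | succ m ih =>
      have := hN (N + m) (Nat.le_add_right N m)
      rw [← add_assoc]
      push_cast
      linarith
  have hlim : Tendsto (fun n : ℕ => (a N - N * β) / n + β) atTop (𝓝 β) := by
    simpa using (tendsto_const_div_atTop_nhds_zero_nat (a N - N * β)).add_const β
  refine le_of_tendsto_of_tendsto hrate hlim ?_
  filter_upwards [eventually_gt_atTop N] with n hn
  obtain ⟨m, rfl⟩ := Nat.exists_eq_add_of_le hn.le
  have hpos : (0 : ℝ) < ((N + m : ℕ) : ℝ) := by exact_mod_cast (Nat.zero_le N).trans_lt hn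
  rw [div_add' _ _ _ hpos.ne', div_le_div_iff_of_pos_right hpos]
  have := hbound m
  push_cast
  linarith

theorem liminf_sub_succ_le_neg_of_tendsto_div {a : ℕ → ℝ} {c : ℝ}
    (hbdd : IsBoundedUnder (· ≥ ·) atTop (fun n => a n - a (n + 1)))
    (hrate : Tendsto (fun n : ℕ => a n / n) atTop (𝓝 c)) :
    liminf (fun n => a n - a (n + 1)) atTop ≤ -c := by
  by_contra! h
  obtain ⟨b, hcb, hb⟩ := exists_between h
  have := le_of_tendsto_div_of_eventually_succ_sub_le (β := -b) hrate <|
    (eventually_lt_of_lt_liminf hb hbdd).mono fun n hn => by linarith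
  linarith

/-- for a non-expanding map with diverging orbit and divergence
rate c, liminf (d(z₀,fⁿz₀) - d(z₀,fⁿ⁺¹z₀)) ≤ -c, and there is a strictly
increasing subsequence (n_k) with w_k = f^{n_k}(z₀) diverging and
limsup (d(z₀,w_k) - d(z₀,f w_k)) ≤ -c. -/
theorem dilation_at_denjoy_wolff {X : Type*} [MetricSpace X]
    (f : X → X) (hf : ∀ a b : X, dist (f a) (f b) ≤ dist a b)
    (z₀ : X) (hdiv : Tendsto (fun n : ℕ => dist z₀ (f^[n] z₀)) atTop atTop)
    (c : ℝ) (hrate : Tendsto (fun n : ℕ => dist z₀ (f^[n] z₀) / n) atTop (nhds c)) :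
    Filter.liminf (fun n : ℕ => dist z₀ (f^[n] z₀) - dist z₀ (f^[n + 1] z₀)) atTop ≤ -c ∧
    ∃ nk : ℕ → ℕ, StrictMono nk ∧
      Tendsto (fun k => dist z₀ (f^[nk k] z₀)) atTop atTop ∧
      Filter.limsup (fun k => dist z₀ (f^[nk k] z₀) - dist z₀ (f (f^[nk k] z₀))) atTop ≤ -c := by
  have hstep := (LipschitzWith.mk_one hf).abs_dist_iterate_sub_dist_iterate_succ_le z₀ z₀
  have hbdd_below : IsBoundedUnder (· ≥ ·) atTop
      (fun n : ℕ => dist z₀ (f^[n] z₀) - dist z₀ (f^[n + 1] z₀)) :=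
    isBoundedUnder_of ⟨_, fun n => (abs_le.1 (hstep n)).1⟩
  have hbdd_above : IsBoundedUnder (· ≤ ·) atTop
      (fun n : ℕ => dist z₀ (f^[n] z₀) - dist z₀ (f^[n + 1] z₀)) :=
    isBoundedUnder_of ⟨_, fun n => (abs_le.1 (hstep n)).2⟩
  have hliminf := liminf_sub_succ_le_neg_of_tendsto_div hbdd_below hrate
  obtain ⟨nk, hnk, hlim⟩ :=
    (MapClusterPt.liminf hbdd_above.isCoboundedUnder_ge hbdd_below).tendsto_subseq
  refine ⟨hliminf, nk, hnk, hdiv.comp hnk.tendsto_atTop, ?_⟩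
  simp_rw [← Function.iterate_succ_apply' f]
  exact hlim.limsup_eq.trans_le hliminf
end

section
/- Let (X,d) be a metric space, f : X → X a non-expanding map, and (w_n)_{n≥0} a backward orbit with bounded step, i.e. f(w_{n+1}) = w_n for all n and sup_n d(w_n, w_{n+1}) < ∞. Then for every m ≥ 1 the backward m-step σ_m := lim_{n→∞} d(w_n, w_{n+m}) exists (the sequence n ↦ d(w_n,w_{n+m}) is non-decreasing and bounded), and for every p ∈ X and every m ≥ 1, σ_m ≥ m · liminf_{n→∞} ( d(p, w_{n+1}) − d(p, w_n) ). (Hence the dilation at the limit boundary point η satisfies log λ_η ≤ inf_m σ_m/m.) -/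
open Filter Metric Topology

/-!
Non-expansion gives `d(w_n, w_{n+m}) = d(f w_{n+1}, f w_{n+1+m}) ≤ d(w_{n+1}, w_{n+1+m})`, and
bounded steps bound this monotone sequence by `m M`, so it converges. For the estimate, the
triangle inequality gives `d(w_n, w_{n+m}) ≥ d(p, w_{n+m}) - d(p, w_n)`, a telescoping sum of `m`
increments each of which eventually exceeds any `c` below their liminf.
-/

open Finset

theorem eventually_mul_le_sub_of_lt_liminf_sub {b : ℕ → ℝ}
    (hb : IsBoundedUnder (· ≥ ·) atTop fun n => b (n + 1) - b n) {c : ℝ}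
    (hc : c < liminf (fun n => b (n + 1) - b n) atTop) (m : ℕ) :
    ∀ᶠ n in atTop, m * c ≤ b (n + m) - b n := by
  obtain ⟨N, hN⟩ := eventually_atTop.mp (eventually_lt_of_lt_liminf hc hb)
  refine eventually_atTop.mpr ⟨N, fun n hn => ?_⟩
  calc (m : ℝ) * c = #(range m) • c := by simp
    _ ≤ ∑ j ∈ range m, (b (n + (j + 1)) - b (n + j)) :=
      card_nsmul_le_sum _ _ _ fun j _ => (hN (n + j) (by omega)).le
    _ = b (n + m) - b n := by rw [sum_range_sub (fun j => b (n + j))]; rfl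

theorem mul_liminf_sub_le_of_tendsto {b u : ℕ → ℝ} {σ : ℝ} {m : ℕ} (hm : 0 < m)
    (hb : IsBoundedUnder (· ≥ ·) atTop fun n => b (n + 1) - b n)
    (hbu : ∀ n, b (n + m) - b n ≤ u n) (hu : Tendsto u atTop (𝓝 σ)) :
    m * liminf (fun n => b (n + 1) - b n) atTop ≤ σ := by
  have hm' : (0 : ℝ) < m := by exact_mod_cast hm
  rw [← le_div_iff₀' hm']
  refine le_of_forall_lt_imp_le_of_dense fun c hc => ?_
  rw [le_div_iff₀' hm']
  refine ge_of_tendsto hu ?_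
  filter_upwards [eventually_mul_le_sub_of_lt_liminf_sub hb hc m] with n hn
  exact hn.trans (hbu n)

section BackwardOrbit

variable {X : Type*} [MetricSpace X]

theorem monotone_dist_add_of_backward_orbit {f : X → X}
    (hf : ∀ a b : X, dist (f a) (f b) ≤ dist a b) {w : ℕ → X}
    (hback : ∀ n : ℕ, f (w (n + 1)) = w n) (m : ℕ) :
    Monotone fun n => dist (w n) (w (n + m)) :=
  monotone_nat_of_le_succ fun n => by
    simpa only [Nat.add_right_comm n 1 m, hback] using hf (w (n + 1)) (w (n + 1 + m))

theorem dist_add_le_mul_of_dist_succ_le {w : ℕ → X} {M : ℝ}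
    (hM : ∀ n : ℕ, dist (w n) (w (n + 1)) ≤ M) (n k : ℕ) :
    dist (w n) (w (n + k)) ≤ k * M :=
  calc dist (w n) (w (n + k)) ≤ ∑ i ∈ range k, dist (w (n + i)) (w (n + i + 1)) :=
        dist_le_range_sum_dist (fun i => w (n + i)) k
    _ ≤ k * M := by simpa using sum_le_card_nsmul (range k) _ M fun i _ => hM (n + i)

end BackwardOrbit

/-- for a backward orbit with bounded step, the backward m-step
σ_m exists (the sequence is non-decreasing and bounded) and satisfies
σ_m ≥ m · liminf (d(p,w_{n+1}) - d(p,w_n)) for every base point p. -/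
theorem backward_step_bound {X : Type*} [MetricSpace X]
    (f : X → X) (hf : ∀ a b : X, dist (f a) (f b) ≤ dist a b)
    (w : ℕ → X) (hback : ∀ n : ℕ, f (w (n + 1)) = w n)
    (M : ℝ) (hM : ∀ n : ℕ, dist (w n) (w (n + 1)) ≤ M) :
    ∀ m : ℕ, 1 ≤ m →
      Monotone (fun n => dist (w n) (w (n + m))) ∧
      ∃ σm : ℝ, Tendsto (fun n => dist (w n) (w (n + m))) atTop (nhds σm) ∧
        ∀ p : X,
          (m : ℝ) * Filter.liminf (fun n => dist p (w (n + 1)) - dist p (w n)) atTop ≤ σm := by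
  intro m hm
  have hmono := monotone_dist_add_of_backward_orbit hf hback m
  have hlim := tendsto_atTop_ciSup hmono
    ⟨m * M, by rintro _ ⟨n, rfl⟩; exact dist_add_le_mul_of_dist_succ_le hM n m⟩
  refine ⟨hmono, _, hlim, fun p => ?_⟩
  refine mul_liminf_sub_le_of_tendsto (b := fun n => dist p (w n)) hm ?_ (fun n => ?_) hlim
  · refine isBoundedUnder_of ⟨-M, fun n => ?_⟩
    linarith [dist_triangle p (w (n + 1)) (w n), dist_comm (w n) (w (n + 1)), hM n]
  · linarith [dist_triangle p (w n) (w (n + m))]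
end
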